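/- arXiv:2503.05688 — 3 statements merged into one kernel-verified Lean document; each statement's English description precedes it below -/
import Mathlib

section
/- Let d ≥ 1 and let σ₁, …, σ_k be permutations of {1,…,d} such that σ_k ∘ σ_{k−1} ∘ ⋯ ∘ σ₁ = id and such that the subgroup of S_d generated by σ₁, …, σ_k acts transitively on {1,…,d}. For a permutation σ let c(σ) denote the number of orbits of σ on {1,…,d} (i.e. the number of disjoint cycles of σ, counting fixed points). Then there exists a unique nonnegative integer g such that Σ_{i=1}^{k} (d − c(σᵢ)) − 2g = 2d − 2; equivalently, Σ_{i=1}^{k} (d − c(σᵢ)) ≥ 2d − 2 and Σ_{i=1}^{k} (d − c(σᵢ)) is even. -/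
/-!
Write each `σ i` as a product of `d - c(σ i)` transpositions and concatenate: this gives
`N = ∑ i, (d - c(σ i))` transpositions with product `1` generating a transitive group, so `N` is
even by taking signs. Multiplying a permutation by a transposition `(a b)` changes its number of
cycles by at most one, and lowers it when `a` and `b` lie in different cycles. Adding the
transpositions `t₁, …, t_N` one at a time therefore keeps
`d + c(t₁ ⋯ t_j) ≤ j + 2 · #orbits⟨t₁, …, t_j⟩`: when `t_j` joins two orbits of the group
generated so far, its points lie in different cycles of the partial product. At `j = N` this
reads `2 d ≤ N + 2`.
-/

open Equiv Equiv.Perm Relation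

namespace Quot

variable {α : Type*} {r s : α → α → Prop}

theorem nat_card_eq_of_eqvGen_iff {β : Type*} (f : α → β) (hf : Function.Surjective f)
    (h : ∀ x y, EqvGen r x y ↔ f x = f y) : Nat.card (Quot r) = Nat.card β := by
  refine Nat.card_eq_of_bijective (Quot.lift f fun x y hxy => (h x y).1 (.rel x y hxy))
    ⟨?_, ?_⟩
  · rintro ⟨x⟩ ⟨y⟩ hxy
    exact Quot.eqvGen_sound ((h x y).2 hxy)
  · intro b
    obtain ⟨x, rfl⟩ := hf b
    exact ⟨Quot.mk r x, rfl⟩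

variable [Finite α]

theorem nat_card_le_of_le_eqvGen (h : ∀ x y, r x y → EqvGen s x y) :
    Nat.card (Quot s) ≤ Nat.card (Quot r) :=
  Nat.card_le_card_of_surjective (Quot.lift (Quot.mk s) fun x y hxy => eqvGen_sound (h x y hxy))
    (by rintro ⟨x⟩; exact ⟨Quot.mk r x, rfl⟩)

theorem nat_card_lt_of_le_eqvGen (h : ∀ x y, r x y → EqvGen s x y) {a b : α}
    (hs : EqvGen s a b) (hr : ¬EqvGen r a b) : Nat.card (Quot s) < Nat.card (Quot r) := by
  have := Fintype.ofFinite (Quot r)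
  have := Fintype.ofFinite (Quot s)
  simp only [Nat.card_eq_fintype_card]
  refine Fintype.card_lt_of_surjective_not_injective
    (Quot.lift (Quot.mk s) fun x y hxy => eqvGen_sound (h x y hxy))
    (by rintro ⟨x⟩; exact ⟨Quot.mk r x, rfl⟩) fun hinj => hr (eqvGen_exact ?_)
  exact hinj (a₁ := Quot.mk r a) (a₂ := Quot.mk r b) (eqvGen_sound hs)

theorem nat_card_le_add_one_of_le_eqvGen_or {a b : α}
    (h : ∀ x y, s x y → EqvGen (fun x y => r x y ∨ x = a ∧ y = b) x y) :
    Nat.card (Quot r) ≤ Nat.card (Quot s) + 1 := by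
  classical
  -- Merging the class of `b` into that of `a` gives a map `Quot s → Quot r` missing at most `⟦b⟧`.
  let merge : Quot r → Quot r := fun q => if q = Quot.mk r b then Quot.mk r a else q
  have hmerge : ∀ x y, EqvGen (fun x y => r x y ∨ x = a ∧ y = b) x y →
      merge (Quot.mk r x) = merge (Quot.mk r y) := by
    intro x y hxy
    induction hxy with
    | rel x y hxy =>
      rcases hxy with hxy | ⟨rfl, rfl⟩
      · rw [Quot.sound hxy]
      · simp [merge]
    | refl => rfl
    | symm _ _ _ ih => exact ih.symm
    | trans _ _ _ _ _ ih₁ ih₂ => exact ih₁.trans ih₂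
  let ψ : Quot s → Quot r :=
    Quot.lift (fun x => merge (Quot.mk r x)) fun x y hxy => hmerge x y (h x y hxy)
  calc Nat.card (Quot r) ≤ Nat.card (Option (Quot s)) := by
        refine Nat.card_le_card_of_surjective (fun o => o.elim (Quot.mk r b) ψ) ?_
        rintro ⟨x⟩
        by_cases hx : Quot.mk r x = Quot.mk r b
        · exact ⟨none, hx.symm⟩
        · exact ⟨some (Quot.mk s x), if_neg hx⟩
    _ = Nat.card (Quot s) + 1 := Finite.card_option

end Quot

theorem Relation.EqvGen.swap_apply {α : Type*} [DecidableEq α] {t : α → α → Prop} {a b : α}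
    (h : EqvGen t a b) (x : α) : EqvGen t x (swap a b x) := by
  rcases eq_or_ne x a with rfl | hxa
  · rwa [swap_apply_left]
  rcases eq_or_ne x b with rfl | hxb
  · rw [swap_apply_right]
    exact h.symm
  rw [swap_apply_of_ne_of_ne hxa hxb]
  exact .refl x

namespace Equiv.Perm

variable {α : Type*}

/-- Adjacency in the Schreier graph of `S`: the classes of `EqvGen (SchreierAdj S)` are the
orbits of `Subgroup.closure S`. -/
def SchreierAdj (S : Set (Perm α)) (x y : α) : Prop := ∃ g ∈ S, g x = y

noncomputable def numOrbits (S : Set (Perm α)) : ℕ := Nat.card (Quot (SchreierAdj S))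

theorem eqvGen_schreierAdj_of_mem_closure {S : Set (Perm α)} {π : Perm α}
    (hπ : π ∈ Subgroup.closure S) (x : α) : EqvGen (SchreierAdj S) x (π x) := by
  induction hπ using Subgroup.closure_induction generalizing x with
  | mem g hg => exact .rel _ _ ⟨g, hg, rfl⟩
  | one => exact .refl x
  | mul g h _ _ ihg ihh => exact .trans _ _ _ (ihh x) (ihg (h x))
  | inv g _ ih => simpa using (ih (g⁻¹ x)).symm

theorem SameCycle.eqvGen_schreierAdj {S : Set (Perm α)} {π : Perm α} {x y : α}
    (h : π.SameCycle x y) (hπ : π ∈ Subgroup.closure S) : EqvGen (SchreierAdj S) x y := by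
  obtain ⟨i, rfl⟩ := h
  exact eqvGen_schreierAdj_of_mem_closure (zpow_mem hπ i) x

theorem eqvGen_schreierAdj_singleton_iff {π : Perm α} {x y : α} :
    EqvGen (SchreierAdj {π}) x y ↔ π.SameCycle x y := by
  refine ⟨fun h => ?_, fun h => h.eqvGen_schreierAdj (Subgroup.subset_closure rfl)⟩
  induction h with
  | rel x y hxy =>
    obtain ⟨g, rfl, rfl⟩ := hxy
    exact sameCycle_apply_right.2 (.refl _ _)
  | refl => exact .refl _ _
  | symm _ _ _ ih => exact ih.symm
  | trans _ _ _ _ _ ih₁ ih₂ => exact ih₁.trans ih₂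

theorem numOrbits_eq_one [Nonempty α] {S : Set (Perm α)}
    (h : ∀ x y, ∃ π ∈ Subgroup.closure S, π x = y) : numOrbits S = 1 := by
  obtain ⟨x₀⟩ := ‹Nonempty α›
  refine Nat.card_eq_one_iff_exists.2 ⟨Quot.mk _ x₀, ?_⟩
  rintro ⟨x⟩
  obtain ⟨π, hπ, rfl⟩ := h x₀ x
  exact (Quot.eqvGen_sound (eqvGen_schreierAdj_of_mem_closure hπ x₀)).symm

theorem numOrbits_le_of_subset_closure [Finite α] {S T : Set (Perm α)}
    (h : T ⊆ Subgroup.closure S) : numOrbits S ≤ numOrbits T :=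
  Quot.nat_card_le_of_le_eqvGen fun x _ ⟨_, hg, hgx⟩ =>
    hgx ▸ eqvGen_schreierAdj_of_mem_closure (h hg) x

section Swap

variable [DecidableEq α] [Finite α]

theorem numOrbits_le_numOrbits_insert_swap {S : Set (Perm α)} {a b : α}
    (h : EqvGen (SchreierAdj S) a b) : numOrbits S ≤ numOrbits (insert (swap a b) S) := by
  refine Quot.nat_card_le_of_le_eqvGen ?_
  rintro x _ ⟨g, rfl | hg, rfl⟩
  · exact h.swap_apply x
  · exact .rel _ _ ⟨g, hg, rfl⟩

theorem numOrbits_le_numOrbits_insert_swap_add_one (S : Set (Perm α)) (a b : α) :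
    numOrbits S ≤ numOrbits (insert (swap a b) S) + 1 := by
  refine Quot.nat_card_le_add_one_of_le_eqvGen_or (a := a) (b := b) ?_
  have hab : EqvGen (fun x y => SchreierAdj S x y ∨ x = a ∧ y = b) a b :=
    .rel _ _ (.inr ⟨rfl, rfl⟩)
  rintro x _ ⟨g, rfl | hg, rfl⟩
  · exact hab.swap_apply x
  · exact .rel _ _ (.inl ⟨g, hg, rfl⟩)

theorem numOrbits_mul_swap_le (π : Perm α) (a b : α) :
    numOrbits {π * swap a b} ≤ numOrbits {π} + 1 := by
  refine Quot.nat_card_le_add_one_of_le_eqvGen_or (a := a) (b := b) ?_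
  have hab : EqvGen (fun x y => SchreierAdj {π * swap a b} x y ∨ x = a ∧ y = b) a b :=
    .rel _ _ (.inr ⟨rfl, rfl⟩)
  rintro x _ ⟨_, rfl, rfl⟩
  refine .trans _ (swap a b x) _ (hab.swap_apply x) (.rel _ _ (.inl ⟨_, rfl, ?_⟩))
  rw [mul_apply, swap_apply_self]

theorem sameCycle_mul_swap_of_not_sameCycle {π : Perm α} {a b : α} (h : ¬π.SameCycle a b) :
    (π * swap a b).SameCycle a b := by
  set m := Function.minimalPeriod π a
  have hm : 0 < m := by
    refine Function.IsPeriodicPt.minimalPeriod_pos (orderOf_pos π) ?_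
    rw [Function.IsPeriodicPt, Function.IsFixedPt, iterate_eq_pow, pow_orderOf_eq_one]
    rfl
  -- `π * swap a b` sends `b` to `π a`, then follows the `π`-cycle of `a` back to `a`.
  have key : ∀ n, n + 1 ≤ m → ((π * swap a b) ^ (n + 1)) b = (π ^ (n + 1)) a := by
    intro n hn
    induction n with
    | zero => simp
    | succ n ih =>
      rw [pow_succ', mul_apply, ih (by omega), mul_apply, swap_apply_of_ne_of_ne, ← mul_apply,
        ← pow_succ']
      · exact Function.not_isPeriodicPt_of_pos_of_lt_minimalPeriod (n := n + 1) (by omega)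
          (by omega)
      · exact fun hb => h ⟨((n + 1 : ℕ) : ℤ), by rw [zpow_natCast]; exact hb⟩
  obtain ⟨n, hn⟩ : ∃ n, m = n + 1 := ⟨m - 1, by omega⟩
  refine SameCycle.symm ⟨m, ?_⟩
  rw [zpow_natCast, hn, key n hn.ge, ← hn, ← iterate_eq_pow]
  exact Function.iterate_minimalPeriod

theorem numOrbits_mul_swap_lt {π : Perm α} {a b : α} (h : ¬π.SameCycle a b) :
    numOrbits {π * swap a b} < numOrbits {π} := by
  have hmerged := eqvGen_schreierAdj_singleton_iff.2 (sameCycle_mul_swap_of_not_sameCycle h)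
  refine Quot.nat_card_lt_of_le_eqvGen ?_ hmerged (mt eqvGen_schreierAdj_singleton_iff.1 h)
  rintro x _ ⟨_, rfl, rfl⟩
  refine .trans _ (swap a b x) _ (hmerged.swap_apply x) (.rel _ _ ⟨_, rfl, ?_⟩)
  rw [mul_apply, swap_apply_self]

end Swap

variable [Fintype α]

theorem numOrbits_le_card (S : Set (Perm α)) : numOrbits S ≤ Fintype.card α :=
  Nat.card_eq_fintype_card (α := α) ▸ Nat.card_le_card_of_surjective _ Quot.mk_surjective

variable [DecidableEq α]

theorem numOrbits_singleton (π : Perm α) :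
    numOrbits {π} = π.partition.parts.card := by
  let f : α → {c // c ∈ π.cycleFactorsFinset} ⊕ {x // x ∉ π.support} := fun x =>
    if hx : x ∈ π.support then .inl ⟨π.cycleOf x, cycleOf_mem_cycleFactorsFinset_iff.2 hx⟩
    else .inr ⟨x, hx⟩
  have hf : Function.Surjective f := by
    rintro (⟨c, hc⟩ | ⟨x, hx⟩)
    · obtain ⟨x, hxc⟩ := (mem_cycleFactorsFinset_iff.1 hc).1.nonempty_support
      have hx := mem_cycleFactorsFinset_support_le hc hxc
      exact ⟨x, by simp only [f, dif_pos hx, cycle_is_cycleOf hxc hc]⟩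
    · exact ⟨x, by simp only [f, dif_neg hx]⟩
  have hker : ∀ x y, EqvGen (SchreierAdj {π}) x y ↔ f x = f y := by
    intro x y
    rw [eqvGen_schreierAdj_singleton_iff]
    by_cases hx : x ∈ π.support <;> by_cases hy : y ∈ π.support <;>
      simp only [f, hx, hy, dif_pos, dif_neg, not_false_eq_true, Sum.inl.injEq, Sum.inr.injEq,
        reduceCtorEq, Subtype.mk.injEq, iff_false]
    · exact sameCycle_iff_cycleOf_eq_of_mem_support hx hy
    · exact fun h => hy (h.mem_support_iff.1 hx)
    · exact fun h => hx (h.mem_support_iff.2 hy)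
    · exact ⟨fun h => h.eq_of_left (notMem_support.1 hx), fun h => h ▸ .refl _ _⟩
  rw [numOrbits, Quot.nat_card_eq_of_eqvGen_iff f hf hker, Nat.card_sum, parts_partition,
    Multiset.card_add, Multiset.card_replicate, cycleType_def, Multiset.card_map]
  rw [Nat.card_eq_fintype_card, Nat.card_eq_fintype_card, Fintype.card_subtype_compl,
    Fintype.card_coe, Fintype.card_coe]
  rfl

theorem numOrbits_one : numOrbits {(1 : Perm α)} = Fintype.card α := by
  simp [numOrbits_singleton, parts_partition]

theorem exists_isSwap_list_prod_eq (σ : Perm α) :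
    ∃ l : List (Perm α), (∀ t ∈ l, t.IsSwap) ∧ l.prod = σ ∧
      l.length + numOrbits {σ} = Fintype.card α := by
  by_cases hσ : σ = 1
  · exact ⟨[], by simp, by simp [hσ], by simp [hσ, numOrbits_one]⟩
  obtain ⟨a, ha⟩ : ∃ a, σ a ≠ a := by simpa [Equiv.ext_iff] using hσ
  -- `σ a` is a fixed point of `σ * swap a (σ a)`: that product splits `σ a` off the cycle of `a`.
  have hsplit : ¬(σ * swap a (σ a)).SameCycle a (σ a) := fun h =>
    ha (h.eq_of_right (by simp [Function.IsFixedPt])).symm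
  have hlt : numOrbits {σ} < numOrbits {σ * swap a (σ a)} := by
    simpa only [mul_swap_mul_self] using numOrbits_mul_swap_lt hsplit
  have hle := numOrbits_mul_swap_le σ a (σ a)
  have hcard := numOrbits_le_card {σ * swap a (σ a)}
  obtain ⟨l, hl, hprod, hlen⟩ := exists_isSwap_list_prod_eq (σ * swap a (σ a))
  refine ⟨l ++ [swap a (σ a)], ?_, by simp [hprod], by simp; omega⟩
  simpa [or_imp, forall_and] using ⟨hl, ⟨a, σ a, ha.symm, rfl⟩⟩
termination_by Fintype.card α - numOrbits {σ}

theorem card_add_numOrbits_prod_le (l : List (Perm α)) (hl : ∀ t ∈ l, t.IsSwap) :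
    Fintype.card α + numOrbits {l.prod} ≤ l.length + 2 * numOrbits {g | g ∈ l} := by
  induction l using List.reverseRecOn with
  | nil =>
    have h := numOrbits_le_of_subset_closure (S := {(1 : Perm α)}) (T := {g | g ∈ []}) (by simp)
    rw [numOrbits_one] at h
    rw [List.prod_nil, numOrbits_one, List.length_nil]
    omega
  | append_singleton l t ih =>
    obtain ⟨a, b, -, rfl⟩ := hl t (by simp)
    have ih := ih fun t ht => hl t (by simp [ht])
    have hset : {g | g ∈ l ++ [swap a b]} = insert (swap a b) {g | g ∈ l} := by
      ext; simp [or_comm]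
    rw [List.prod_append, List.prod_singleton, List.length_append, List.length_singleton, hset]
    by_cases hab : EqvGen (SchreierAdj {g | g ∈ l}) a b
    · have h₁ := numOrbits_mul_swap_le l.prod a b
      have h₂ := numOrbits_le_numOrbits_insert_swap hab
      omega
    · have hprod : l.prod ∈ Subgroup.closure {g | g ∈ l} :=
        list_prod_mem fun g hg => Subgroup.subset_closure hg
      have h₁ := numOrbits_mul_swap_lt fun h => hab (h.eqvGen_schreierAdj hprod)
      have h₂ := numOrbits_le_numOrbits_insert_swap_add_one {g | g ∈ l} a b
      omega

theorem even_length_of_prod_eq_one {l : List (Perm α)} (hl : ∀ t ∈ l, t.IsSwap)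
    (h : l.prod = 1) : Even l.length := by
  have := sign_prod_list_swap hl
  rw [h, map_one, eq_comm, neg_one_pow_eq_one_iff_even (by decide)] at this
  exact this

theorem two_mul_card_le_and_even_of_prod_eq_one (ls : List (Perm α)) (h : ls.prod = 1) :
    2 * Fintype.card α ≤
        (ls.map fun σ => Fintype.card α - numOrbits {σ}).sum + 2 * numOrbits {g | g ∈ ls} ∧
      Even (ls.map fun σ => Fintype.card α - numOrbits {σ}).sum := by
  choose f hswap hprod hlen using exists_isSwap_list_prod_eq (α := α)
  set L := (ls.map f).flatten
  have hLswap : ∀ t ∈ L, t.IsSwap := by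
    simp only [L, List.mem_flatten, List.mem_map]
    rintro t ⟨_, ⟨σ, -, rfl⟩, ht⟩
    exact hswap σ t ht
  have hLprod : L.prod = 1 := by
    rw [List.prod_flatten, List.map_map, show List.prod ∘ f = id from funext hprod, List.map_id,
      h]
  have hLlen : L.length = (ls.map fun σ => Fintype.card α - numOrbits {σ}).sum := by
    simp only [L, List.length_flatten, List.map_map]
    congr 1
    refine List.map_congr_left fun σ _ => ?_
    have := hlen σ
    simp only [Function.comp_apply]
    omega
  have hLorbits : numOrbits {g | g ∈ L} ≤ numOrbits {g | g ∈ ls} :=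
    numOrbits_le_of_subset_closure fun σ hσ => hprod σ ▸ list_prod_mem fun t ht =>
      Subgroup.subset_closure (List.mem_flatten.2 ⟨f σ, List.mem_map_of_mem hσ, ht⟩)
  have hRee := card_add_numOrbits_prod_le L hLswap
  rw [hLprod, numOrbits_one] at hRee
  exact ⟨by omega, hLlen ▸ even_length_of_prod_eq_one hLswap hLprod⟩

end Equiv.Perm

/-- If `σ 0, …, σ (k-1)` are permutations of `{1, …, d}` whose
right-to-left product is the identity and which generate a transitive subgroup, then
there is a unique nonnegative integer `g` satisfying the Riemann–Hurwitz formula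
`∑ i (d − c(σ i)) − 2 g = 2 d − 2`, where `c(σ)` is the number of disjoint cycles of `σ`
(counting fixed points), i.e. the number of parts of the partition of `d` attached to `σ`. -/
theorem riemannHurwitz_genus_existsUnique (d k : ℕ) (hd : 1 ≤ d)
    (σ : Fin k → Equiv.Perm (Fin d))
    (hprod : (List.ofFn σ).reverse.prod = 1)
    (htrans : ∀ i j : Fin d, ∃ π ∈ Subgroup.closure (Set.range σ), π i = j) :
    ∃! g : ℕ,
      (∑ i : Fin k, ((d : ℤ) - (((σ i).partition.parts.card : ℤ)))) - 2 * g
        = 2 * d - 2 := by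
  have : Nonempty (Fin d) := ⟨⟨0, hd⟩⟩
  have hrange : {g | g ∈ (List.ofFn σ).reverse} = Set.range σ := by ext; simp
  have htransitive : numOrbits {g | g ∈ (List.ofFn σ).reverse} = 1 :=
    numOrbits_eq_one (hrange ▸ htrans)
  obtain ⟨hRee, heven⟩ := two_mul_card_le_and_even_of_prod_eq_one _ hprod
  simp only [Fintype.card_fin, htransitive] at hRee heven
  have hsum : ∑ i, ((d : ℤ) - (σ i).partition.parts.card) =
      (((List.ofFn σ).reverse.map fun τ => d - numOrbits {τ}).sum : ℕ) := by
    rw [List.map_reverse, List.sum_reverse, List.map_ofFn, List.sum_ofFn, Nat.cast_sum]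
    refine Finset.sum_congr rfl fun i _ => ?_
    have hle := numOrbits_le_card {σ i}
    rw [Fintype.card_fin] at hle
    rw [Function.comp_apply, Nat.cast_sub hle, numOrbits_singleton]
  rw [hsum]
  obtain ⟨m, hm⟩ := heven
  refine ⟨m - (d - 1), by omega, fun g hg => by omega⟩
end

section
/- Let P = (g, d, B, A, φ, br, rm) be a portrait, let 𝒯 be a B-marked stable tree, let (ord, mon, cyc) be a P-decoration of 𝒯, and let h be a half-edge of 𝒯. Then the triple (ord′, mon′, cyc′) obtained from (ord, mon, cyc) by the anticlockwise braid move at h is again a P-decoration of 𝒯 (it satisfies conditions (i)–(v)); the same holds for the clockwise braid move at h. -/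
open scoped Classical

/-- A `B`-marked graph (with legs), in the half-edge formalism: a finite set `H` of
half-edges, a finite set `V` of vertices, an attachment map `base`, an involution `pair`
whose 2-element orbits are the edges and whose fixed points are the legs, and a labelling
of the legs by `B`. -/
structure BMarkedGraph (B : Type) : Type 1 where
  /-- the half-edges -/
  H : Type
  /-- the vertices -/
  V : Type
  [fintH : Fintype H]
  [decH : DecidableEq H]
  [fintV : Fintype V]
  [decV : DecidableEq V]
  /-- the vertex a half-edge is attached to -/
  base : H → V
  /-- the edge-pairing involution; legs are exactly its fixed points -/
  pair : H → H
  pair_invol : ∀ h, pair (pair h) = h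
  /-- the labelling of the legs by `B` -/
  leg : B → H
  leg_inj : Function.Injective leg
  pair_leg : ∀ b, pair (leg b) = leg b
  leg_of_fixed : ∀ h, pair h = h → ∃ b, leg b = h

attribute [instance] BMarkedGraph.fintH BMarkedGraph.decH BMarkedGraph.fintV BMarkedGraph.decV

namespace BMarkedGraph

variable {B : Type} (T : BMarkedGraph B)

/-- Two vertices are adjacent if some edge joins them. -/
def Adj (v w : T.V) : Prop :=
  ∃ h, T.pair h ≠ h ∧ T.base h = v ∧ T.base (T.pair h) = w

/-- A `B`-marked graph is a stable tree if it has no self-loops, is connected, has exactly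
one fewer edge than it has vertices (so that it is a tree), and every vertex has total
valence (incident edge half-edges plus legs) at least three. -/
def IsStableTree : Prop :=
  (∀ h, T.pair h ≠ h → T.base (T.pair h) ≠ T.base h) ∧
  (∀ v w : T.V, Relation.ReflTransGen T.Adj v w) ∧
  (Fintype.card {h : T.H // T.pair h ≠ h} + 2 = 2 * Fintype.card T.V) ∧
  (∀ v : T.V, 3 ≤ Fintype.card {h : T.H // T.base h = v})

/-- Adjacency avoiding the vertex `v`. -/
def AdjAvoid (v x y : T.V) : Prop := x ≠ v ∧ y ≠ v ∧ T.Adj x y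

/-- `T.InSide h k` says that the half-edge `k` lies in the connected component of
`T ∖ {base h}` containing `h`: either `k = h`, or `h` belongs to an edge and the base of
`k` is reachable from the other endpoint of that edge without passing through `base h`. -/
def InSide (h k : T.H) : Prop :=
  k = h ∨ (T.pair h ≠ h ∧ k ≠ h ∧
    Relation.ReflTransGen (T.AdjAvoid (T.base h)) (T.base (T.pair h)) (T.base k))

end BMarkedGraph

/-- A portrait `P = (g, d, B, A, φ, br, rm)`: the combinatorial data prescribing the
branching behaviour of the branched covers under consideration.  Here `br b` is a
partition of `d` recorded as a multiset of positive parts summing to `d`. -/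
structure Portrait (B A : Type) [Fintype B] [DecidableEq B] [Fintype A] [DecidableEq A] where
  /-- the source genus -/
  g : ℕ
  /-- the degree -/
  d : ℕ
  d_pos : 1 ≤ d
  card_B : 3 ≤ Fintype.card B
  card_A : (2 : ℤ) - 2 * (g : ℤ) - (Fintype.card A : ℤ) < 0
  /-- the function on the source marks -/
  phi : A → B
  /-- the branch profiles of the target marks: partitions of `d` -/
  br : B → Multiset ℕ
  /-- the ramifications (local degrees) at the source marks -/
  rm : A → ℕ
  rm_pos : ∀ a, 1 ≤ rm a
  br_pos : ∀ b, ∀ n ∈ br b, 1 ≤ n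
  br_sum : ∀ b, (br b).sum = d
  /-- the Riemann–Hurwitz formula -/
  riemannHurwitz :
    (∑ b : B, ((d : ℤ) - ((br b).card : ℤ))) - 2 * (g : ℤ) = 2 * (d : ℤ) - 2
  /-- for each `b ∈ B`, `(rm a)_{a ∈ φ⁻¹ b}` is a sub-multiset of `br b` -/
  rm_sub : ∀ b : B, (Finset.univ.filter fun a => phi a = b).val.map rm ≤ br b

variable {B A : Type} [Fintype B] [DecidableEq B] [Fintype A] [DecidableEq A]

/-- The raw data `(ord, mon, cyc)` of a `P`-decoration of the `B`-marked graph `T`.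
A cycle of a leg permutation is recorded by one of its points, so `cyc : A → Fin P.d`
sends `a` to a point of the cycle `cyc(a)` of `mon(φ a)`. -/
structure PreDecoration (P : Portrait B A) (T : BMarkedGraph B) where
  /-- the cyclic orderings of the half-edges around the vertices -/
  ord : Equiv.Perm T.H
  /-- the permutation attached to each half-edge -/
  mon : T.H → Equiv.Perm (Fin P.d)
  /-- a point of the cycle labelled by each source mark -/
  cyc : A → Fin P.d

/-- `prodAlong ord mon h n = mon (ord^(n-1) h) * ⋯ * mon (ord h) * mon h`: the
right-to-left product of the permutations along `n` successive half-edges of the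
`ord`-cycle starting at `h`. -/
def prodAlong {H : Type} {d : ℕ} (ord : Equiv.Perm H) (mon : H → Equiv.Perm (Fin d)) :
    H → ℕ → Equiv.Perm (Fin d)
  | _, 0 => 1
  | h, n + 1 => prodAlong ord mon (ord h) n * mon h

/-- `(ord, mon, cyc)` is a `P`-decoration of `T`:  `ord` preserves the vertices and has
exactly one cycle for each vertex, consisting of all the half-edges incident with it;
(i) the cyclic product of the permutations around each vertex is the identity;
(ii) the permutations on the two half-edges of an edge are inverse;
(iii) each leg permutation `mon (leg b)` has cycle type `br b` (as a partition of `d`,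
  fixed points included);
(iv) `cyc` is injective into the disjoint union of the cycles of the leg permutations,
  and the cycle of `mon (leg (φ a))` through `cyc a` has length `rm a`;
(v) the leg permutations generate a transitive subgroup of `S_d`. -/
def IsDecoration (P : Portrait B A) (T : BMarkedGraph B) (D : PreDecoration P T) : Prop :=
  (∀ h, T.base (D.ord h) = T.base h) ∧
  (∀ h k, T.base h = T.base k → ∃ n : ℕ, (D.ord ^ n) h = k) ∧
  (∀ h (n : ℕ), (D.ord ^ n) h = h → prodAlong D.ord D.mon h n = 1) ∧
  (∀ h, T.pair h ≠ h → D.mon (T.pair h) = (D.mon h)⁻¹) ∧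
  (∀ b, (Equiv.Perm.partition (D.mon (T.leg b))).parts = P.br b) ∧
  (∀ a a', P.phi a = P.phi a' →
    (D.mon (T.leg (P.phi a))).SameCycle (D.cyc a) (D.cyc a') → a = a') ∧
  (∀ a, Function.minimalPeriod (⇑(D.mon (T.leg (P.phi a)))) (D.cyc a) = P.rm a) ∧
  (∀ i j : Fin P.d, ∃ π ∈ Subgroup.closure (Set.range fun b => D.mon (T.leg b)), π i = j)

/-- Global conjugation of a decoration by `τ ∈ S_d`. -/
def globalConj {P : Portrait B A} {T : BMarkedGraph B} (τ : Equiv.Perm (Fin P.d))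
    (D : PreDecoration P T) : PreDecoration P T where
  ord := D.ord
  mon := fun h => τ * D.mon h * τ⁻¹
  cyc := fun a => τ (D.cyc a)

/-- The anticlockwise braid move at the half-edge `h`: with `h̃ = ord h`, the half-edge
`h` is shifted one step anticlockwise through `h̃`, and the permutations and cycle labels
on the component of `T ∖ {base h}` containing `h` are conjugated by `mon h̃`. -/
noncomputable def braidACW {P : Portrait B A} {T : BMarkedGraph B}
    (D : PreDecoration P T) (h : T.H) : PreDecoration P T where
  ord := Equiv.swap h (D.ord h) * D.ord * (Equiv.swap h (D.ord h))⁻¹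
  mon := fun k =>
    if T.InSide h k then D.mon (D.ord h) * D.mon k * (D.mon (D.ord h))⁻¹ else D.mon k
  cyc := fun a =>
    if T.InSide h (T.leg (P.phi a)) then D.mon (D.ord h) (D.cyc a) else D.cyc a

/-- The clockwise braid move at the half-edge `h`: with `h̃ = ord⁻¹ h`, the half-edge
`h` is shifted one step clockwise through `h̃`, and the permutations and cycle labels
on the component of `T ∖ {base h}` containing `h` are conjugated by `(mon h̃)⁻¹`. -/
noncomputable def braidCW {P : Portrait B A} {T : BMarkedGraph B}
    (D : PreDecoration P T) (h : T.H) : PreDecoration P T where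
  ord := Equiv.swap h (D.ord⁻¹ h) * D.ord * (Equiv.swap h (D.ord⁻¹ h))⁻¹
  mon := fun k =>
    if T.InSide h k then (D.mon (D.ord⁻¹ h))⁻¹ * D.mon k * D.mon (D.ord⁻¹ h) else D.mon k
  cyc := fun a =>
    if T.InSide h (T.leg (P.phi a)) then (D.mon (D.ord⁻¹ h))⁻¹ (D.cyc a) else D.cyc a

/-!
Let `v` be the vertex of `h` and `s, ord s` the two half-edges at `v` that the move swaps in
the cyclic order (`s = h` anticlockwise, `ord s = h` clockwise). In a tree every vertex other
than `v`, and both half-edges of every edge, lie on one side of `v`, so cyclic products away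
from `v` and the edge condition are either untouched or conjugated; at `v` only the adjacent
factors `mon (ord s) * mon s` change, and the conjugating permutation is chosen so that their
product is preserved. Leg permutations and marked cycles are conjugated together, so cycle
types, cycle lengths and the separation of marks survive. Finally, the vertex relations write
every edge permutation through the legs on its far side, so the legs generate the whole
monodromy group; it contains the conjugating permutation, so the move leaves it unchanged.
-/

namespace Equiv.Perm

variable {α : Type*}

theorem minimalPeriod_conj_apply (c σ : Perm α) (x : α) :
    Function.minimalPeriod (c * σ * c⁻¹) (c x) = Function.minimalPeriod σ x := by
  refine Function.minimalPeriod_eq_minimalPeriod_iff.2 fun n => ?_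
  rw [Function.IsPeriodicPt, Function.IsPeriodicPt, Function.IsFixedPt, Function.IsFixedPt,
    iterate_eq_pow, iterate_eq_pow, conj_pow]
  simp

theorem minimalPeriod_pow_apply [Finite α] (σ : Perm α) (m : ℕ) (x : α) :
    Function.minimalPeriod σ ((σ ^ m) x) = Function.minimalPeriod σ x := by
  rw [← iterate_eq_pow]
  exact Function.minimalPeriod_apply_iterate (σ.injective.mem_periodicPts x) m

theorem pow_minimalPeriod_apply (σ : Perm α) (x : α) :
    (σ ^ Function.minimalPeriod σ x) x = x := by
  rw [← iterate_eq_pow]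
  exact Function.iterate_minimalPeriod

theorem pow_apply_eq_pow_apply_iff {σ : Perm α} {x : α} {m n : ℕ}
    (hm : m < Function.minimalPeriod σ x) (hn : n < Function.minimalPeriod σ x) :
    (σ ^ m) x = (σ ^ n) x ↔ m = n := by
  simpa [iterate_eq_pow] using Function.iterate_eq_iterate_iff_of_lt_minimalPeriod hm hn

end Equiv.Perm

section prodAlong

open Equiv Function

variable {H : Type} {d : ℕ} (ord : Perm H) (mon : H → Perm (Fin d))

theorem prodAlong_add (k : H) (m n : ℕ) :
    prodAlong ord mon k (m + n) = prodAlong ord mon ((ord ^ m) k) n * prodAlong ord mon k m := by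
  induction m generalizing k with
  | zero => simp [prodAlong]
  | succ m ih =>
    rw [Nat.add_right_comm, prodAlong, ih, prodAlong, pow_succ, Perm.mul_apply, mul_assoc]

theorem prodAlong_congr {mon' : H → Perm (Fin d)} (k : H) (n : ℕ)
    (h : ∀ j < n, mon' ((ord ^ j) k) = mon ((ord ^ j) k)) :
    prodAlong ord mon' k n = prodAlong ord mon k n := by
  induction n generalizing k with
  | zero => rfl
  | succ n ih =>
    have h0 : mon' k = mon k := h 0 n.succ_pos
    rw [prodAlong, prodAlong, h0, ih (ord k) fun j hj => by
      simpa [pow_succ] using h (j + 1) (by omega)]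

theorem prodAlong_conj (c : Perm (Fin d)) (k : H) (n : ℕ) :
    prodAlong ord (fun x => c * mon x * c⁻¹) k n = c * prodAlong ord mon k n * c⁻¹ := by
  induction n generalizing k with
  | zero => simp [prodAlong]
  | succ n ih => simp only [prodAlong, ih]; group

theorem prodAlong_relabel (σ : Perm H) (k : H) (n : ℕ) :
    prodAlong (σ * ord * σ⁻¹) mon k n = prodAlong ord (mon ∘ σ) (σ⁻¹ k) n := by
  induction n generalizing k with
  | zero => rfl
  | succ n ih => simp [prodAlong, ih]

theorem prodAlong_mem {K : Subgroup (Perm (Fin d))} (k : H) (n : ℕ)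
    (h : ∀ j < n, mon ((ord ^ j) k) ∈ K) : prodAlong ord mon k n ∈ K := by
  induction n generalizing k with
  | zero => exact K.one_mem
  | succ n ih =>
    exact K.mul_mem (ih (ord k) fun j hj => by simpa [pow_succ] using h (j + 1) (by omega))
      (h 0 n.succ_pos)

theorem prodAlong_mul_of_pow_apply_eq_self {k : H} {L : ℕ} (hk : (ord ^ L) k = k) (q : ℕ) :
    prodAlong ord mon k (q * L) = prodAlong ord mon k L ^ q := by
  induction q with
  | zero => simp [prodAlong]
  | succ q ih =>
    rw [Nat.succ_mul, prodAlong_add, pow_mul', Perm.pow_apply_eq_self_of_apply_eq_self hk, ih,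
      pow_succ']

theorem prodAlong_pow_apply_of_pow_apply_eq_self {s : H} {L : ℕ} (hs : (ord ^ L) s = s)
    (m : ℕ) : prodAlong ord mon ((ord ^ m) s) L =
      prodAlong ord mon s m * prodAlong ord mon s L * (prodAlong ord mon s m)⁻¹ := by
  have h := prodAlong_add ord mon s L m
  rw [hs, add_comm, prodAlong_add] at h
  exact eq_mul_inv_of_mul_eq h

theorem prodAlong_eq_one_of_minimalPeriod [Finite H] {s : H}
    (hs : prodAlong ord mon s (minimalPeriod ord s) = 1) (m : ℕ) {n : ℕ}
    (hn : (ord ^ n) ((ord ^ m) s) = (ord ^ m) s) : prodAlong ord mon ((ord ^ m) s) n = 1 := by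
  have hdvd : minimalPeriod ord s ∣ n := by
    rw [← ord.minimalPeriod_pow_apply m s]
    exact IsPeriodicPt.minimalPeriod_dvd (by rwa [IsPeriodicPt, IsFixedPt, Perm.iterate_eq_pow])
  obtain ⟨q, rfl⟩ := hdvd
  rw [mul_comm, prodAlong_mul_of_pow_apply_eq_self ord mon (by
      rw [← Perm.mul_apply, ← pow_add, add_comm, pow_add, Perm.mul_apply,
        ord.pow_minimalPeriod_apply]),
    prodAlong_pow_apply_of_pow_apply_eq_self ord mon (ord.pow_minimalPeriod_apply s), hs]
  simp

theorem prodAlong_add_two_congr {mon' : H → Perm (Fin d)} (s : H) (r : ℕ)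
    (hs : mon' (ord s) * mon' s = mon (ord s) * mon s)
    (htail : ∀ j < r, mon' ((ord ^ (j + 2)) s) = mon ((ord ^ (j + 2)) s)) :
    prodAlong ord mon' s (r + 2) = prodAlong ord mon s (r + 2) := by
  have htail' : prodAlong ord mon' (ord (ord s)) r = prodAlong ord mon (ord (ord s)) r :=
    prodAlong_congr ord mon _ r fun j hj => by simpa [pow_succ, pow_add] using htail j hj
  simp only [prodAlong, htail', mul_assoc, hs]

end prodAlong

namespace BMarkedGraph

open Relation Equiv Function

variable {B : Type} (T : BMarkedGraph B)

def AdjVia (S : Finset T.H) (x y : T.V) : Prop :=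
  ∃ m ∈ S, T.base m = x ∧ T.base (T.pair m) = y

/-- A connected graph has at least `|V| - 1` edges. -/
theorem two_mul_card_le_card_add_two (S : Finset T.H)
    (hS : ∀ m ∈ S, T.pair m ∈ S ∧ T.pair m ≠ m) (v : T.V)
    (hv : ∀ x, ReflTransGen (T.AdjVia S) v x) :
    2 * Fintype.card T.V ≤ S.card + 2 := by
  let G := SimpleGraph.fromRel (T.AdjVia S)
  have hreach : ∀ x, G.Reachable v x := fun x => by
    induction hv x with
    | refl => rfl
    | @tail y z _ hyz ih =>
      by_cases hne : y = z
      · exact hne ▸ ih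
      · exact ih.trans (SimpleGraph.Adj.reachable
          ((SimpleGraph.fromRel_adj _ _ _).2 ⟨hne, Or.inl hyz⟩))
  have hconn : G.Connected :=
    haveI : Nonempty T.V := ⟨v⟩
    ⟨fun x y => (hreach x).symm.trans (hreach y)⟩
  let e : T.H → Sym2 T.V := fun m => s(T.base m, T.base (T.pair m))
  have hedges : G.edgeFinset ⊆ S.image e := by
    intro z hz
    induction z using Sym2.ind with
    | _ x y =>
      rw [SimpleGraph.mem_edgeFinset, SimpleGraph.mem_edgeSet, SimpleGraph.fromRel_adj] at hz
      obtain ⟨-, ⟨m, hm, rfl, rfl⟩ | ⟨m, hm, rfl, rfl⟩⟩ := hz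
      · exact Finset.mem_image_of_mem e hm
      · exact Finset.mem_image.2
          ⟨T.pair m, (hS m hm).1, by simp [e, T.pair_invol, Sym2.eq_swap]⟩
  have himage : 2 * (S.image e).card ≤ S.card := by
    refine Finset.mul_card_image_le_card S 2 fun z hz => ?_
    obtain ⟨m, hm, rfl⟩ := Finset.mem_image.1 hz
    have hsub : ({m, T.pair m} : Finset T.H) ⊆ S.filter fun a => e a = e m := by
      simp [Finset.insert_subset_iff, hm, (hS m hm).1, e, T.pair_invol]
    exact (Finset.card_pair (hS m hm).2.symm).symm.trans_le (Finset.card_le_card hsub)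
  have hcard := hconn.card_vert_le_card_edgeSet_add_one
  rw [Nat.card_eq_fintype_card, Nat.card_eq_fintype_card, ← SimpleGraph.edgeFinset_card] at hcard
  have := Finset.card_le_card hedges
  omega

theorem adjAvoid_symm (v : T.V) {x y : T.V} (h : T.AdjAvoid v x y) : T.AdjAvoid v y x := by
  obtain ⟨hx, hy, m, hm, rfl, rfl⟩ := h
  exact ⟨hy, hx, T.pair m, by rwa [T.pair_invol, ne_comm], rfl, by rw [T.pair_invol]⟩

theorem reflTransGen_adjAvoid_symm {v x y : T.V} (h : ReflTransGen (T.AdjAvoid v) x y) :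
    ReflTransGen (T.AdjAvoid v) y x := by
  induction h with
  | refl => rfl
  | tail _ hyz ih => exact ih.head (T.adjAvoid_symm v hyz)

theorem ne_of_reflTransGen_adjAvoid {v x y : T.V} (h : ReflTransGen (T.AdjAvoid v) x y)
    (hx : x ≠ v) : y ≠ v := by
  induction h with
  | refl => exact hx
  | tail _ hyz => exact hyz.2.1

/-- Otherwise deleting the edge of `h` would leave a connected graph with too few edges. -/
theorem not_reflTransGen_adjAvoid (hT : T.IsStableTree) {h k : T.H} (hh : T.pair h ≠ h)
    (hk : T.pair k ≠ k) (hbase : T.base k = T.base h) (hhk : h ≠ k) :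
    ¬ ReflTransGen (T.AdjAvoid (T.base h)) (T.base (T.pair h)) (T.base (T.pair k)) := by
  intro hreach
  obtain ⟨hloop, hconn, hcard, -⟩ := hT
  set E : Finset T.H := Finset.univ.filter fun m => T.pair m ≠ m
  set S : Finset T.H := E \ {h, T.pair h}
  have hph : T.pair (T.pair h) ≠ T.pair h := by rwa [T.pair_invol, ne_comm]
  have hmemS : ∀ m, m ∈ S ↔ T.pair m ≠ m ∧ m ≠ h ∧ m ≠ T.pair h := by
    simp [S, E]
  have hS : ∀ m ∈ S, T.pair m ∈ S ∧ T.pair m ≠ m := by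
    intro m hm
    rw [hmemS] at hm ⊢
    obtain ⟨hm, hmh, hmph⟩ := hm
    refine ⟨⟨by rwa [T.pair_invol, ne_comm], fun e => hmph ?_, fun e => hmh ?_⟩, hm⟩
    · rw [← e, T.pair_invol]
    · rw [← T.pair_invol m, e, T.pair_invol]
  have hstep : ∀ x y, T.AdjAvoid (T.base h) x y → T.AdjVia S x y := by
    rintro x y ⟨hx, hy, m, hm, rfl, rfl⟩
    refine ⟨m, (hmemS m).2 ⟨hm, ?_, ?_⟩, rfl, rfl⟩
    · rintro rfl; exact hx rfl
    · rintro rfl; exact hy (by rw [T.pair_invol])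
  have hvk : T.AdjVia S (T.base h) (T.base (T.pair k)) := by
    refine ⟨k, (hmemS k).2 ⟨hk, hhk.symm, ?_⟩, hbase, rfl⟩
    rintro rfl
    exact hloop h hh hbase
  have hvh : ReflTransGen (T.AdjVia S) (T.base h) (T.base (T.pair h)) :=
    (ReflTransGen.single hvk).trans
      (ReflTransGen.mono hstep _ _ (T.reflTransGen_adjAvoid_symm hreach))
  have hall : ∀ x, ReflTransGen (T.AdjVia S) (T.base h) x := fun x => by
    induction hconn (T.base h) x with
    | refl => rfl
    | @tail y z _ hyz ih =>
      obtain ⟨m, hm, rfl, rfl⟩ := hyz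
      by_cases hmh : m = h
      · exact hmh ▸ hvh
      by_cases hmph : m = T.pair h
      · rw [hmph, T.pair_invol]
      exact ih.tail ⟨m, (hmemS m).2 ⟨hm, hmh, hmph⟩, rfl, rfl⟩
  have hcount := T.two_mul_card_le_card_add_two S hS _ hall
  have hsub : ({h, T.pair h} : Finset T.H) ⊆ E := by
    simp [Finset.insert_subset_iff, E, hh, hph]
  rw [Finset.card_sdiff_of_subset hsub, Finset.card_pair hh.symm] at hcount
  have hE : E.card + 2 = 2 * Fintype.card T.V := by rw [← hcard, Fintype.card_subtype]
  have hE2 : 2 ≤ E.card := Finset.card_pair hh.symm ▸ Finset.card_le_card hsub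
  omega

theorem inSide_self (h : T.H) : T.InSide h h := Or.inl rfl

theorem inSide_iff_of_ne {h k : T.H} (hk : k ≠ h) : T.InSide h k ↔
    T.pair h ≠ h ∧ ReflTransGen (T.AdjAvoid (T.base h)) (T.base (T.pair h)) (T.base k) := by
  simp [InSide, hk]

theorem inSide_pair_self {h : T.H} (hh : T.pair h ≠ h) : T.InSide h (T.pair h) :=
  (T.inSide_iff_of_ne hh).2 ⟨hh, .refl⟩

theorem not_inSide_of_base_eq (hT : T.IsStableTree) {h k : T.H} (hk : k ≠ h)
    (hb : T.base k = T.base h) : ¬ T.InSide h k := by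
  rw [T.inSide_iff_of_ne hk]
  rintro ⟨hh, hr⟩
  exact T.ne_of_reflTransGen_adjAvoid hr (hT.1 h hh) hb

theorem inSide_iff_of_base_eq {h x y : T.H} (hxy : T.base x = T.base y)
    (hx : T.base x ≠ T.base h) : T.InSide h x ↔ T.InSide h y := by
  rw [T.inSide_iff_of_ne (ne_of_apply_ne T.base hx),
    T.inSide_iff_of_ne (ne_of_apply_ne T.base (hxy ▸ hx)), hxy]

theorem inSide_pair_iff (hT : T.IsStableTree) {h k : T.H} (hk : T.pair k ≠ k) :
    T.InSide h (T.pair k) ↔ T.InSide h k := by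
  have hk' : T.pair (T.pair k) ≠ T.pair k := by rwa [T.pair_invol, ne_comm]
  have hoff : ∀ m, T.pair m ≠ m → m ≠ h → T.pair m ≠ h → T.base m = T.base h →
      ¬ T.InSide h m ∧ ¬ T.InSide h (T.pair m) := fun m hm hmh hpm hb =>
    ⟨T.not_inSide_of_base_eq hT hmh hb, by
      rw [T.inSide_iff_of_ne hpm]
      rintro ⟨hh, hr⟩
      exact T.not_reflTransGen_adjAvoid hT hh hm hb (Ne.symm hmh) hr⟩
  by_cases hkh : k = h
  · subst hkh
    simp [T.inSide_self, T.inSide_pair_self hk]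
  by_cases hpk : T.pair k = h
  · obtain rfl : k = T.pair h := by rw [← hpk, T.pair_invol]
    simp [T.pair_invol, T.inSide_self, T.inSide_pair_self hkh]
  by_cases hb : T.base k = T.base h
  · simp [hoff k hk hkh hpk hb]
  by_cases hb' : T.base (T.pair k) = T.base h
  · have := hoff (T.pair k) hk' hpk (by rwa [T.pair_invol]) hb'
    rw [T.pair_invol] at this
    simp [this]
  rw [T.inSide_iff_of_ne hpk, T.inSide_iff_of_ne hkh]
  refine and_congr_right fun _ => ⟨fun hr => hr.tail ⟨hb', hb, T.pair k, hk', rfl, ?_⟩,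
    fun hr => hr.tail ⟨hb, hb', k, hk, rfl, rfl⟩⟩
  rw [T.pair_invol]

theorem reflTransGen_adjAvoid_of_forall_ne {v w a b : T.V}
    (hr : ReflTransGen (T.AdjAvoid v) a b)
    (hw : ∀ z, ReflTransGen (T.AdjAvoid v) a z → z ≠ w) :
    ReflTransGen (T.AdjAvoid w) a b := by
  induction hr with
  | refl => rfl
  | @tail y z hay hyz ih => exact ih.tail ⟨hw y hay, hw z (hay.tail hyz), hyz.2.2⟩

theorem filter_inSide_ssubset (hT : T.IsStableTree) {k x : T.H} (hk : T.pair k ≠ k)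
    (hx : T.pair x ≠ x) (hbx : T.base x = T.base (T.pair k)) (hxk : x ≠ T.pair k) :
    Finset.univ.filter (T.InSide x) ⊂ Finset.univ.filter (T.InSide k) := by
  have hk' : T.pair (T.pair k) ≠ T.pair k := by rwa [T.pair_invol, ne_comm]
  have hvw : T.base (T.pair k) ≠ T.base k := hT.1 k hk
  have hxk' : x ≠ k := fun e => hvw (by rw [← hbx, e])
  have hsep : ∀ z, ReflTransGen (T.AdjAvoid (T.base x)) (T.base (T.pair x)) z →
      z ≠ T.base k := by
    rintro z hz rfl
    have := T.not_reflTransGen_adjAvoid hT hx hk' hbx.symm hxk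
    rw [T.pair_invol] at this
    exact this hz
  refine Finset.ssubset_iff_subset_ne.2 ⟨fun y hy => ?_, fun e => ?_⟩
  · simp only [Finset.mem_filter, Finset.mem_univ, true_and] at hy ⊢
    rcases eq_or_ne y x with rfl | hyx
    · exact (T.inSide_iff_of_ne hxk').2 ⟨hk, hbx ▸ .refl⟩
    rw [T.inSide_iff_of_ne hyx] at hy
    obtain ⟨-, hr⟩ := hy
    have hyk : y ≠ k := by
      rintro rfl
      exact hsep _ hr rfl
    refine (T.inSide_iff_of_ne hyk).2 ⟨hk, .head ⟨hvw, hsep _ .refl, x, hx, hbx, rfl⟩ ?_⟩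
    exact T.reflTransGen_adjAvoid_of_forall_ne hr hsep
  · have hkk : k ∈ Finset.univ.filter (T.InSide x) := by
      rw [e]
      simp [T.inSide_self]
    simp only [Finset.mem_filter, Finset.mem_univ, true_and, T.inSide_iff_of_ne hxk'.symm] at hkk
    exact hsep _ hkk.2 rfl

variable {d : ℕ}

theorem base_pow_apply {ord : Perm T.H} (hbase : ∀ x, T.base (ord x) = T.base x) (n : ℕ)
    (x : T.H) : T.base ((ord ^ n) x) = T.base x := by
  induction n with
  | zero => rfl
  | succ n ih => rw [pow_succ', Perm.mul_apply, hbase, ih]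

theorem apply_ne_self_of_two_le_card {ord : Perm T.H}
    (htrans : ∀ x y, T.base x = T.base y → ∃ n : ℕ, (ord ^ n) x = y)
    (hval : ∀ v, 2 ≤ Fintype.card {x : T.H // T.base x = v}) (x : T.H) : ord x ≠ x := by
  intro hfix
  have hle : Fintype.card {y : T.H // T.base y = T.base x} ≤ 1 := by
    refine Fintype.card_le_one_iff.2 fun ⟨y, hy⟩ ⟨z, hz⟩ => ?_
    obtain ⟨n, rfl⟩ := htrans x y hy.symm
    obtain ⟨n', rfl⟩ := htrans x z hz.symm
    simp [Perm.pow_apply_eq_self_of_apply_eq_self hfix]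
  have := hval (T.base x)
  omega

/-- The cyclic relation at the far end of `k` writes `mon k` as a product over the other
half-edges there, each of which has a strictly smaller side; legs end the recursion. -/
theorem mon_mem_closure_leg (hT : T.IsStableTree) (ord : Perm T.H) (mon : T.H → Perm (Fin d))
    (hbase : ∀ x, T.base (ord x) = T.base x)
    (hprod : ∀ x (n : ℕ), (ord ^ n) x = x → prodAlong ord mon x n = 1)
    (hpair : ∀ x, T.pair x ≠ x → mon (T.pair x) = (mon x)⁻¹) (k : T.H) :
    mon k ∈ Subgroup.closure (Set.range fun b => mon (T.leg b)) := by
  set K := Subgroup.closure (Set.range fun b => mon (T.leg b))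
  suffices h : ∀ n k, (Finset.univ.filter (T.InSide k)).card = n → mon k ∈ K from h _ k rfl
  intro n
  induction n using Nat.strong_induction_on with
  | _ n ih =>
  rintro k rfl
  have hleg : ∀ x, T.pair x = x → mon x ∈ K := fun x hx => by
    obtain ⟨b, rfl⟩ := T.leg_of_fixed x hx
    exact Subgroup.subset_closure ⟨b, rfl⟩
  by_cases hk : T.pair k = k
  · exact hleg k hk
  set s := T.pair k
  obtain ⟨m, hm⟩ := Nat.exists_eq_succ_of_ne_zero
    (minimalPeriod_pos_of_mem_periodicPts (ord.injective.mem_periodicPts s)).ne'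
  have hcycle := hprod s _ (ord.pow_minimalPeriod_apply s)
  rw [hm, prodAlong, hpair k hk, mul_inv_eq_one] at hcycle
  rw [← hcycle]
  refine prodAlong_mem ord mon _ m fun j hj => ?_
  rw [← Perm.mul_apply, ← pow_succ]
  by_cases hx : T.pair ((ord ^ (j + 1)) s) = (ord ^ (j + 1)) s
  · exact hleg _ hx
  have hxs : (ord ^ (j + 1)) s ≠ (ord ^ 0) s := fun e => by
    rw [Perm.pow_apply_eq_pow_apply_iff (by omega) (by omega)] at e
    omega
  exact ih _ (Finset.card_lt_card (T.filter_inSide_ssubset hT hk hx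
    (T.base_pow_apply hbase _ _) (by simpa using hxs))) _ rfl

theorem base_swap_apply {ord : Perm T.H} (hbase : ∀ x, T.base (ord x) = T.base x) (s x : T.H) :
    T.base (swap s (ord s) x) = T.base x := by
  rw [swap_apply_def]
  split_ifs <;> subst_vars <;> simp [hbase]

theorem base_conj_apply {σ ord : Perm T.H} (hσ : ∀ x, T.base (σ x) = T.base x)
    (hbase : ∀ x, T.base (ord x) = T.base x) (x : T.H) :
    T.base ((σ * ord * σ⁻¹) x) = T.base x := by
  simpa [hσ, hbase] using (hσ (σ⁻¹ x)).symm

theorem exists_pow_conj_apply_eq {σ ord : Perm T.H} (hσ : ∀ x, T.base (σ x) = T.base x)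
    (htrans : ∀ x y, T.base x = T.base y → ∃ n : ℕ, (ord ^ n) x = y) {x y : T.H}
    (hxy : T.base x = T.base y) : ∃ n : ℕ, ((σ * ord * σ⁻¹) ^ n) x = y := by
  have hσ' : ∀ z, T.base (σ⁻¹ z) = T.base z := fun z => by simpa using (hσ (σ⁻¹ z)).symm
  obtain ⟨n, hn⟩ := htrans (σ⁻¹ x) (σ⁻¹ y) (by rw [hσ', hσ', hxy])
  exact ⟨n, by rw [conj_pow, Perm.mul_apply, Perm.mul_apply, hn]; simp⟩

theorem prodAlong_eq_one_of_modify {ord : Perm T.H} {mon mon' : T.H → Perm (Fin d)}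
    (hbase : ∀ x, T.base (ord x) = T.base x)
    (htrans : ∀ x y, T.base x = T.base y → ∃ n : ℕ, (ord ^ n) x = y)
    (hprod : ∀ x (n : ℕ), (ord ^ n) x = x → prodAlong ord mon x n = 1)
    (hfix : ∀ x, ord x ≠ x) (s : T.H)
    (hnear : ∀ x, T.base x = T.base s → x ≠ s → x ≠ ord s → mon' x = mon x)
    (hs : mon' (ord s) * mon' s = mon (ord s) * mon s)
    (hfar : ∀ x, T.base x ≠ T.base s →
      ∃ τ, ∀ y, T.base y = T.base x → mon' y = τ * mon y * τ⁻¹)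
    {k : T.H} {n : ℕ} (hk : (ord ^ n) k = k) : prodAlong ord mon' k n = 1 := by
  by_cases hbk : T.base k = T.base s
  · obtain ⟨m, rfl⟩ := htrans s k hbk.symm
    refine prodAlong_eq_one_of_minimalPeriod ord mon' ?_ m hk
    have hpos := minimalPeriod_pos_of_mem_periodicPts (ord.injective.mem_periodicPts s)
    have hne : minimalPeriod ord s ≠ 1 := fun e => hfix s (by
      simpa [e] using ord.pow_minimalPeriod_apply s)
    obtain ⟨r, hr⟩ : ∃ r, minimalPeriod ord s = r + 2 :=
      ⟨minimalPeriod ord s - 2, by omega⟩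
    have hpow : ∀ i < 2, ∀ j < r, (ord ^ (j + 2)) s ≠ (ord ^ i) s := fun i hi j hj e => by
      rw [Perm.pow_apply_eq_pow_apply_iff (by omega) (by omega)] at e
      omega
    rw [hr, prodAlong_add_two_congr ord mon s r hs fun j hj =>
        hnear _ (T.base_pow_apply hbase _ _) (by simpa using hpow 0 (by omega) j hj)
          (by simpa using hpow 1 (by omega) j hj),
      ← hr]
    exact hprod s _ (ord.pow_minimalPeriod_apply s)
  · obtain ⟨τ, hτ⟩ := hfar k hbk
    rw [prodAlong_congr ord (fun x => τ * mon x * τ⁻¹) k n fun j _ =>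
        hτ _ (T.base_pow_apply hbase _ _), prodAlong_conj, hprod k n hk, mul_one, mul_inv_cancel]

end BMarkedGraph

open Equiv

/-- `braidACW D h = D.swapConj h h (D.mon (D.ord h))` and
`braidCW D (D.ord s) = D.swapConj (D.ord s) s (D.mon s)⁻¹`. -/
noncomputable def PreDecoration.swapConj {P : Portrait B A} {T : BMarkedGraph B}
    (D : PreDecoration P T) (h s : T.H) (c : Perm (Fin P.d)) : PreDecoration P T where
  ord := swap s (D.ord s) * D.ord * (swap s (D.ord s))⁻¹
  mon := fun k => if T.InSide h k then c * D.mon k * c⁻¹ else D.mon k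
  cyc := fun a => if T.InSide h (T.leg (P.phi a)) then c (D.cyc a) else D.cyc a

namespace PreDecoration

theorem exists_swapConj_leg {P : Portrait B A} {T : BMarkedGraph B} (D : PreDecoration P T)
    (h s : T.H) (c : Perm (Fin P.d)) (b : B) : ∃ τ,
    (D.swapConj h s c).mon (T.leg b) = τ * D.mon (T.leg b) * τ⁻¹ ∧
      ∀ a, P.phi a = b → (D.swapConj h s c).cyc a = τ (D.cyc a) := by
  by_cases hin : T.InSide h (T.leg b)
  · exact ⟨c, by simp [swapConj, hin], by rintro a rfl; simp [swapConj, hin]⟩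
  · exact ⟨1, by simp [swapConj, hin], by rintro a rfl; simp [swapConj, hin]⟩

variable {P : Portrait B A} {T : BMarkedGraph B} {D : PreDecoration P T} {h s : T.H}
  {c : Perm (Fin P.d)}

theorem ord_apply_ne_self (hT : T.IsStableTree) (hD : IsDecoration P T D) (x : T.H) :
    D.ord x ≠ x :=
  T.apply_ne_self_of_two_le_card hD.2.1 (fun v => le_trans (by norm_num) (hT.2.2.2 v)) x

theorem prodAlong_swapConj (hT : T.IsStableTree) (hD : IsDecoration P T D)
    (hhs : h = s ∨ h = D.ord s)
    (hs : (D.swapConj h s c).mon s * (D.swapConj h s c).mon (D.ord s) =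
      D.mon (D.ord s) * D.mon s)
    (k : T.H) (n : ℕ) (hk : ((D.swapConj h s c).ord ^ n) k = k) :
    prodAlong (D.swapConj h s c).ord (D.swapConj h s c).mon k n = 1 := by
  obtain ⟨hbase, htrans, hprod, -⟩ := id hD
  set σ := swap s (D.ord s)
  have hσ : ∀ x, T.base (σ x) = T.base x := T.base_swap_apply hbase s
  have hbs : T.base s = T.base h := by rcases hhs with rfl | rfl <;> simp [hbase]
  change prodAlong (σ * D.ord * σ⁻¹) _ k n = 1
  rw [prodAlong_relabel]
  refine T.prodAlong_eq_one_of_modify hbase htrans hprod (ord_apply_ne_self hT hD) s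
    (fun x hx hxs hxs' => ?_) (by simpa [σ] using hs) (fun x hx => ?_) ?_
  · have hxh : x ≠ h := by rcases hhs with rfl | rfl <;> assumption
    simp [σ, swapConj, swap_apply_of_ne_of_ne hxs hxs',
      T.not_inSide_of_base_eq hT hxh (hx.trans hbs)]
  · refine ⟨if T.InSide h x then c else 1, fun y hy => ?_⟩
    have hys : y ≠ s := by rintro rfl; exact hx hy.symm
    have hys' : y ≠ D.ord s := by rintro rfl; exact hx (hy.symm.trans (hbase s))
    have hin := T.inSide_iff_of_base_eq hy (hy ▸ hbs ▸ hx)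
    by_cases hx' : T.InSide h x <;> simp [σ, swapConj, swap_apply_of_ne_of_ne hys hys', hin, hx']
  · change ((σ * D.ord * σ⁻¹) ^ n) k = k at hk
    rwa [conj_pow, Perm.mul_apply, Perm.mul_apply, ← Perm.eq_inv_iff_eq] at hk

theorem isDecoration_swapConj (hT : T.IsStableTree) (hD : IsDecoration P T D)
    (hhs : h = s ∨ h = D.ord s)
    (hs : (D.swapConj h s c).mon s * (D.swapConj h s c).mon (D.ord s) =
      D.mon (D.ord s) * D.mon s)
    (hc : c ∈ Subgroup.closure (Set.range (D.swapConj h s c).mon)) :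
    IsDecoration P T (D.swapConj h s c) := by
  set D' := D.swapConj h s c
  have hσ := T.base_swap_apply hD.1 s
  have hbase' : ∀ x, T.base (D'.ord x) = T.base x := T.base_conj_apply hσ hD.1
  have hprod' := prodAlong_swapConj hT hD hhs hs
  have hpair' : ∀ k, T.pair k ≠ k → D'.mon (T.pair k) = (D'.mon k)⁻¹ := fun k hk => by
    simp only [D', swapConj, T.inSide_pair_iff hT hk, hD.2.2.2.1 k hk]
    split_ifs <;> group
  obtain ⟨-, htrans, -, -, hcycType, hsep, hlen, htransitive⟩ := hD
  refine ⟨hbase', fun x y => T.exists_pow_conj_apply_eq hσ htrans, hprod', hpair',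
    fun b => ?_, fun a a' hphi hsame => ?_, fun a => ?_, fun i j => ?_⟩
  · obtain ⟨τ, hτ, -⟩ := D.exists_swapConj_leg h s c b
    rw [hτ, ← Perm.partition_eq_of_isConj.1 (isConj_iff.2 ⟨τ, rfl⟩)]
    exact hcycType b
  · obtain ⟨τ, hτ, hcyc⟩ := D.exists_swapConj_leg h s c (P.phi a)
    rw [hτ, hcyc a rfl, hcyc a' hphi.symm, Perm.sameCycle_conj] at hsame
    exact hsep a a' hphi (by simpa using hsame)
  · obtain ⟨τ, hτ, hcyc⟩ := D.exists_swapConj_leg h s c (P.phi a)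
    rw [hτ, hcyc a rfl, Perm.minimalPeriod_conj_apply]
    exact hlen a
  · set K := Subgroup.closure (Set.range fun b => D'.mon (T.leg b))
    have hmon : Subgroup.closure (Set.range D'.mon) ≤ K := (Subgroup.closure_le K).2 <|
      Set.range_subset_iff.2 (T.mon_mem_closure_leg hT D'.ord D'.mon hbase' hprod' hpair')
    have hle : Subgroup.closure (Set.range fun b => D.mon (T.leg b)) ≤ K := by
      refine (Subgroup.closure_le K).2 (Set.range_subset_iff.2 fun b => ?_)
      have hb : D'.mon (T.leg b) ∈ K := Subgroup.subset_closure ⟨b, rfl⟩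
      by_cases hin : T.InSide h (T.leg b)
      · have : D.mon (T.leg b) = c⁻¹ * D'.mon (T.leg b) * c := by
          simp only [D', swapConj, if_pos hin]
          group
        rw [this]
        exact K.mul_mem (K.mul_mem (K.inv_mem (hmon hc)) hb) (hmon hc)
      · simpa [D', swapConj, hin] using hb
    obtain ⟨π, hπ, hij⟩ := htransitive i j
    exact ⟨π, hle hπ, hij⟩

end PreDecoration

open PreDecoration in
/-- Braid moves (anticlockwise and clockwise) take `P`-decorations of a
`B`-marked stable tree to `P`-decorations. -/
theorem isDecoration_braid (P : Portrait B A) (T : BMarkedGraph B)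
    (hT : T.IsStableTree) (D : PreDecoration P T) (hD : IsDecoration P T D) (h : T.H) :
    IsDecoration P T (braidACW D h) ∧ IsDecoration P T (braidCW D h) := by
  constructor
  · have hout : ¬ T.InSide h (D.ord h) :=
      T.not_inSide_of_base_eq hT (ord_apply_ne_self hT hD h) (hD.1 h)
    refine isDecoration_swapConj (s := h) (c := D.mon (D.ord h)) hT hD (.inl rfl) ?_
      (Subgroup.subset_closure ⟨D.ord h, by simp [swapConj, hout]⟩)
    simp [swapConj, T.inSide_self, hout]
  · obtain ⟨s, rfl⟩ := D.ord.surjective h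
    have hin : ¬ T.InSide (D.ord s) s :=
      T.not_inSide_of_base_eq hT (ord_apply_ne_self hT hD s).symm (hD.1 s).symm
    have hbraid : braidCW D (D.ord s) = D.swapConj (D.ord s) s (D.mon s)⁻¹ := by
      simp [braidCW, swapConj, swap_comm]
    rw [hbraid]
    refine isDecoration_swapConj hT hD (.inr rfl) ?_
      (inv_mem (Subgroup.subset_closure ⟨s, by simp [swapConj, hin]⟩))
    simp [swapConj, hin, T.inSide_self, mul_assoc]
end

section
/- Let P = (g, d, B, A, φ, br, rm) be a portrait and 𝒯 a B-marked stable tree. If two P-decorations of 𝒯 are Hurwitz equivalent, then their induced source graphs 𝒢 are isomorphic as A-marked vertex-weighted graphs: there is a graph isomorphism between them preserving the vertex weights g_{(v,O)} and sending the leg labelled a to the leg labelled a for each a ∈ A. (This is the paper's assertion that the stabilised source graph 𝒢′ ∈ Stab_{g,A} is independent of the representative P-decorated tree.) -/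
open scoped Classical

variable {B A : Type} [Fintype B] [DecidableEq B] [Fintype A] [DecidableEq A]

/-- One step of Hurwitz equivalence: a global conjugation, or a braid move
(anticlockwise or clockwise). -/
inductive HurwitzStep (P : Portrait B A) (T : BMarkedGraph B) :
    PreDecoration P T → PreDecoration P T → Prop
  | conj (τ : Equiv.Perm (Fin P.d)) (D : PreDecoration P T) :
      HurwitzStep P T D (globalConj τ D)
  | acw (D : PreDecoration P T) (h : T.H) : HurwitzStep P T D (braidACW D h)
  | cw (D : PreDecoration P T) (h : T.H) : HurwitzStep P T D (braidCW D h)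

/-- Two decorations are Hurwitz equivalent if one is obtained from the other by a finite
sequence of global conjugations and braid moves. -/
def HurwitzEquiv (P : Portrait B A) (T : BMarkedGraph B)
    (D D' : PreDecoration P T) : Prop :=
  Relation.ReflTransGen (HurwitzStep P T) D D'
/-- The cycle of the permutation `σ` through the point `x`, as the finset of points in the
same cycle as `x` (a fixed point gives a cycle of length one). -/
noncomputable def cycleFinset {d : ℕ} (σ : Equiv.Perm (Fin d)) (x : Fin d) :
    Finset (Fin d) :=
  Finset.univ.filter fun y => σ.SameCycle x y

/-- `c` is (the underlying point set of) a cycle of `σ`, fixed points included. -/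
def IsCycleOf {d : ℕ} (σ : Equiv.Perm (Fin d)) (c : Finset (Fin d)) : Prop :=
  ∃ x, c = cycleFinset σ x

variable {P : Portrait B A} {T : BMarkedGraph B}

/-- The subgroup of `S_d` generated by the permutations on the half-edges incident with
the vertex `v`. -/
def monAt (D : PreDecoration P T) (v : T.V) : Subgroup (Equiv.Perm (Fin P.d)) :=
  Subgroup.closure {σ | ∃ h, T.base h = v ∧ σ = D.mon h}

/-- The orbit of the point `x` under the subgroup generated by the permutations at `v`. -/
noncomputable def orbitAt (D : PreDecoration P T) (v : T.V) (x : Fin P.d) :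
    Finset (Fin P.d) :=
  Finset.univ.filter fun y => ∃ π ∈ monAt D v, π x = y

/-- `O` is an orbit of `{1, …, d}` under the subgroup generated by the permutations on the
half-edges incident with `v`. -/
def IsOrbitAt (D : PreDecoration P T) (v : T.V) (O : Finset (Fin P.d)) : Prop :=
  ∃ x, O = orbitAt D v x

/-- The cycles of `σ` that are contained in the set `O`. -/
noncomputable def cyclesIn {d : ℕ} (σ : Equiv.Perm (Fin d)) (O : Finset (Fin d)) :
    Finset (Finset (Fin d)) :=
  (O.image fun x => cycleFinset σ x).filter fun c => c ⊆ O

/-- `∑_c (len(c) − 1)`, the sum over the cycles `c ⊆ O` of the permutations on the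
half-edges incident with `v`. -/
noncomputable def localSum (D : PreDecoration P T) (v : T.V) (O : Finset (Fin P.d)) : ℤ :=
  ∑ h ∈ Finset.univ.filter (fun h => T.base h = v),
    ∑ c ∈ cyclesIn (D.mon h) O, ((c.card : ℤ) - 1)

/-- The local Riemann–Hurwitz equation at the vertex `(v, O)` of the source graph:
`∑_c (len(c) − 1) − 2 n = 2 |O| − 2`. -/
def LocalRH (D : PreDecoration P T) (v : T.V) (O : Finset (Fin P.d)) (n : ℕ) : Prop :=
  localSum D v O - 2 * (n : ℤ) = 2 * (O.card : ℤ) - 2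

/-- The orbit (under the subgroup generated by the permutations at `v`) containing the
point set `c`. -/
noncomputable def orbitOfFinset (D : PreDecoration P T) (v : T.V)
    (c : Finset (Fin P.d)) : Finset (Fin P.d) :=
  Finset.univ.filter fun y => ∃ x ∈ c, y ∈ orbitAt D v x

/-- The vertex `(base h, O)` of the source graph `𝒢` to which the half-edge `(h, c)`
(a cycle `c` of `mon h`) is attached: `O` is the orbit at `base h` containing `c`. -/
noncomputable def attachVertex (D : PreDecoration P T) (q : T.H × Finset (Fin P.d)) :
    T.V × Finset (Fin P.d) :=
  (T.base q.1, orbitOfFinset D (T.base q.1) q.2)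

/-- The vertex set of the source graph `𝒢` of the decoration `D`. -/
def GVset (D : PreDecoration P T) : Set (T.V × Finset (Fin P.d)) :=
  {p | IsOrbitAt D p.1 p.2}

/-- The half-edge set of the source graph `𝒢` of the decoration `D`: the pairs `(h, c)`
with `c` a cycle of `mon h`. -/
def GHset (D : PreDecoration P T) : Set (T.H × Finset (Fin P.d)) :=
  {q | IsCycleOf (D.mon q.1) q.2}

/-- An isomorphism of the source graphs of `D₁` and `D₂`, as `A`-marked vertex-weighted
graphs: bijections between the vertex sets and between the half-edge sets, commuting with
the attachment of half-edges to vertices and with the edge pairing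
`(h, c) ↦ (pair h, c)`, preserving the genus weights (i.e. the local Riemann–Hurwitz
equations), and sending the leg labelled `a` to the leg labelled `a` for each `a ∈ A`. -/
def IsoSourceGraphs (D₁ D₂ : PreDecoration P T) : Prop :=
  ∃ (eV : T.V × Finset (Fin P.d) → T.V × Finset (Fin P.d))
    (eH : T.H × Finset (Fin P.d) → T.H × Finset (Fin P.d)),
    Set.BijOn eV (GVset D₁) (GVset D₂) ∧
    Set.BijOn eH (GHset D₁) (GHset D₂) ∧
    (∀ q ∈ GHset D₁, attachVertex D₂ (eH q) = eV (attachVertex D₁ q)) ∧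
    (∀ q ∈ GHset D₁, eH (T.pair q.1, q.2) = (T.pair (eH q).1, (eH q).2)) ∧
    (∀ p ∈ GVset D₁, ∀ n : ℕ, LocalRH D₁ p.1 p.2 n ↔ LocalRH D₂ (eV p).1 (eV p).2 n) ∧
    (∀ a : A, eH (T.leg (P.phi a), cycleFinset (D₁.mon (T.leg (P.phi a))) (D₁.cyc a)) =
      (T.leg (P.phi a), cycleFinset (D₂.mon (T.leg (P.phi a))) (D₂.cyc a)))


/-!
Every Hurwitz move only conjugates the permutation `mon k` on each half-edge `k` by some
`σ k`. The source graph does not see such a change as long as `σ` is constant on each edge of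
`𝒯` and, at each vertex `v`, all the `σ k` agree with a single `τ v` up to the local monodromy
group at `v` (which fixes each orbit at `v`): then `(v, O) ↦ (v, τ v O)` and
`(k, c) ↦ (k, σ k c)` is an isomorphism. A global conjugation uses one conjugator everywhere.
A braid move at `h` conjugates by `ρ = mon(h̃)^{±1}` exactly on the component of
`𝒯 ∖ {base h}` containing `h`. Because `𝒯` is a tree, that component contains no other
half-edge at `base h`, so it consists of whole edges and of all the half-edges at each of its
vertices; at `base h` only `h` itself is conjugated, by an element of the local monodromy
group, which the move leaves unchanged.
-/

lemma SimpleGraph.connected_of_forall_reflTransGen {V : Type*} [Nonempty V]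
    {R : V → V → Prop} {G : SimpleGraph V} (hR : ∀ x y, Relation.ReflTransGen R x y)
    (hG : ∀ x y, R x y → G.Reachable x y) : G.Connected :=
  (SimpleGraph.connected_iff _).2 ⟨fun x y => (G.reachable_iff_reflTransGen x y).2
    (Relation.ReflTransGen.lift' id (fun a b hab => (G.reachable_iff_reflTransGen a b).1
      (hG a b hab)) _ _ (hR x y)), inferInstance⟩

namespace BMarkedGraph

variable {L : Type} {Γ : BMarkedGraph L}

def edgeGraph (Γ : BMarkedGraph L) (S : Finset Γ.H) : SimpleGraph Γ.V :=
  SimpleGraph.fromEdgeSet ↑(S.image fun e => s(Γ.base e, Γ.base (Γ.pair e)))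

lemma edgeGraph_adj {S : Finset Γ.H} {e : Γ.H} (he : e ∈ S)
    (hloop : Γ.base (Γ.pair e) ≠ Γ.base e) :
    (Γ.edgeGraph S).Adj (Γ.base e) (Γ.base (Γ.pair e)) :=
  (SimpleGraph.fromEdgeSet_adj _).2 ⟨Finset.mem_image_of_mem _ he, hloop.symm⟩

lemma two_mul_card_edgeSet_edgeGraph_le {S : Finset Γ.H}
    (hS : ∀ e ∈ S, Γ.pair e ≠ e ∧ Γ.pair e ∈ S) :
    2 * Nat.card (Γ.edgeGraph S).edgeSet ≤ S.card := by
  let f : Γ.H → Sym2 Γ.V := fun e => s(Γ.base e, Γ.base (Γ.pair e))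
  refine le_trans ?_ (Finset.mul_card_image_le_card (f := f) S 2 ?_)
  · rw [← Set.ncard_coe_finset, Nat.card_coe_set_eq]
    gcongr
    · exact Set.toFinite _
    · exact SimpleGraph.edgeSet_fromEdgeSet _ ▸ Set.sdiff_subset
  · simp only [Finset.mem_image]
    rintro _ ⟨e, he, rfl⟩
    have hfe : f (Γ.pair e) = f e := by simp only [f, Γ.pair_invol, Sym2.eq_swap]
    rw [← Finset.card_pair (hS e he).1]
    exact Finset.card_le_card (Finset.insert_subset (Finset.mem_filter.2 ⟨(hS e he).2, hfe⟩)
      (Finset.singleton_subset_iff.2 (Finset.mem_filter.2 ⟨he, rfl⟩)))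

lemma ne_of_reflTransGen_adjAvoid_s9 {v x y : Γ.V} (hx : x ≠ v)
    (hxy : Relation.ReflTransGen (Γ.AdjAvoid v) x y) : y ≠ v :=
  hxy.cases_tail.elim (· ▸ hx) fun ⟨_, _, hzy⟩ => hzy.2.1

/- Such a path would let the edge of `h` be deleted without disconnecting the graph, leaving a
connected graph on `|V|` vertices with only `|V| - 2` edges. -/
theorem IsStableTree.not_reflTransGen_adjAvoid (hT : Γ.IsStableTree) {h k : Γ.H}
    (hhk : h ≠ k) (hbase : Γ.base h = Γ.base k) (hh : Γ.pair h ≠ h) (hk : Γ.pair k ≠ k) :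
    ¬ Relation.ReflTransGen (Γ.AdjAvoid (Γ.base h)) (Γ.base (Γ.pair h))
      (Γ.base (Γ.pair k)) := by
  obtain ⟨hloop, hconn, hcard, -⟩ := hT
  intro hpath
  let S := (Finset.univ.filter fun e => Γ.pair e ≠ e) \ {h, Γ.pair h}
  have hmemS : ∀ e, e ∈ S ↔ Γ.pair e ≠ e ∧ e ≠ h ∧ e ≠ Γ.pair h := by simp [S]
  have hsub : ({h, Γ.pair h} : Finset Γ.H) ⊆ Finset.univ.filter fun e => Γ.pair e ≠ e := by
    intro e he
    simp only [Finset.mem_insert, Finset.mem_singleton] at he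
    rcases he with rfl | rfl <;> simp [Γ.pair_invol, hh, Ne.symm hh]
  have hS : S.card + 2 = Fintype.card {e : Γ.H // Γ.pair e ≠ e} := by
    have := Finset.card_le_card hsub
    rw [Fintype.card_subtype, Finset.card_sdiff_of_subset hsub]
    rw [Finset.card_pair (Ne.symm hh)] at this ⊢
    omega
  let G := Γ.edgeGraph S
  have hedges : 2 * Nat.card G.edgeSet ≤ S.card :=
    two_mul_card_edgeSet_edgeGraph_le fun e he => by
    obtain ⟨he₁, he₂, he₃⟩ := (hmemS e).1 he
    refine ⟨he₁, (hmemS _).2 ⟨by rwa [Γ.pair_invol, ne_comm], fun h' => he₃ ?_, ?_⟩⟩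
    · rw [← h', Γ.pair_invol]
    · exact fun h' => he₂ (by simpa [Γ.pair_invol] using congrArg Γ.pair h')
  have hadj : ∀ e, Γ.pair e ≠ e → e ≠ h → e ≠ Γ.pair h →
      G.Adj (Γ.base e) (Γ.base (Γ.pair e)) := fun e he₁ he₂ he₃ =>
    edgeGraph_adj ((hmemS e).2 ⟨he₁, he₂, he₃⟩) (hloop e he₁)
  have havoid : ∀ x y, Γ.AdjAvoid (Γ.base h) x y → G.Adj x y := by
    rintro x y ⟨hx, hy, e, he, rfl, rfl⟩
    refine hadj e he (by rintro rfl; exact hx rfl) ?_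
    rintro rfl
    exact hy (by rw [Γ.pair_invol])
  have hreach : G.Reachable (Γ.base h) (Γ.base (Γ.pair h)) := by
    have hkh : k ≠ Γ.pair h := by rintro rfl; exact hloop h hh hbase.symm
    refine (hbase ▸ (hadj k hk (Ne.symm hhk) hkh).reachable).trans ?_
    exact ((G.reachable_iff_reflTransGen _ _).2
      (Relation.ReflTransGen.mono havoid _ _ hpath)).symm
  have : Nonempty Γ.V := ⟨Γ.base h⟩
  have hG : G.Connected := SimpleGraph.connected_of_forall_reflTransGen hconn fun _ _ hab => by
    obtain ⟨e, he, rfl, rfl⟩ := hab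
    by_cases heh : e = h
    · exact heh ▸ hreach
    by_cases heh' : e = Γ.pair h
    · rw [heh', Γ.pair_invol]
      exact hreach.symm
    · exact (hadj e he heh heh').reachable
  have := hG.card_vert_le_card_edgeSet_add_one
  rw [Nat.card_eq_fintype_card] at this
  omega

theorem IsStableTree.inSide_pair_iff (hT : Γ.IsStableTree) (h k : Γ.H) :
    Γ.InSide h (Γ.pair k) ↔ Γ.InSide h k := by
  suffices H : ∀ k, Γ.InSide h k → Γ.InSide h (Γ.pair k) from
    ⟨fun hk => Γ.pair_invol k ▸ H _ hk, H k⟩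
  intro k hin
  by_cases hpk : Γ.pair k = k
  · rwa [hpk]
  rcases hin with rfl | ⟨hph, hkh, hpath⟩
  · exact Or.inr ⟨hpk, hpk, .refl⟩
  by_cases hpkh : Γ.pair k = h
  · exact Or.inl hpkh
  by_cases hbpk : Γ.base (Γ.pair k) = Γ.base h
  · refine absurd ?_ (hT.not_reflTransGen_adjAvoid (Ne.symm hpkh) hbpk.symm hph
      (by rw [Γ.pair_invol]; exact Ne.symm hpk))
    rwa [Γ.pair_invol]
  · refine Or.inr ⟨hph, hpkh, hpath.tail ⟨?_, hbpk, k, hpk, rfl, rfl⟩⟩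
    exact ne_of_reflTransGen_adjAvoid_s9 (hT.1 h hph) hpath

end BMarkedGraph

section Conjugation

variable {d : ℕ}

@[simp]
lemma mem_cycleFinset {σ : Equiv.Perm (Fin d)} {x y : Fin d} :
    y ∈ cycleFinset σ x ↔ σ.SameCycle x y := by
  simp [cycleFinset]

lemma cycleFinset_conj (π σ : Equiv.Perm (Fin d)) (x : Fin d) :
    cycleFinset (π * σ * π⁻¹) (π x) = (cycleFinset σ x).image π := by
  ext y
  rw [mem_cycleFinset, Equiv.Perm.sameCycle_conj, Finset.mem_image]
  refine ⟨fun hxy => ⟨π⁻¹ y, by simpa using hxy, by simp⟩, ?_⟩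
  rintro ⟨z, hz, rfl⟩
  simpa using hz

lemma cyclesIn_conj (π σ : Equiv.Perm (Fin d)) (O : Finset (Fin d)) :
    cyclesIn (π * σ * π⁻¹) (O.image π) = (cyclesIn σ O).image (Finset.image π) := by
  ext c
  simp only [cyclesIn, Finset.mem_filter, Finset.mem_image, exists_exists_and_eq_and,
    cycleFinset_conj]
  constructor
  · rintro ⟨⟨x, hx, rfl⟩, hsub⟩
    exact ⟨cycleFinset σ x, ⟨⟨x, hx, rfl⟩, (Finset.image_subset_image_iff π.injective).1 hsub⟩,
      rfl⟩
  · rintro ⟨_, ⟨⟨x, hx, rfl⟩, hsub⟩, rfl⟩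
    exact ⟨⟨x, hx, rfl⟩, Finset.image_subset_image hsub⟩

lemma sum_cyclesIn_conj (π σ : Equiv.Perm (Fin d)) (O : Finset (Fin d)) :
    ∑ c ∈ cyclesIn (π * σ * π⁻¹) (O.image π), ((c.card : ℤ) - 1) =
      ∑ c ∈ cyclesIn σ O, ((c.card : ℤ) - 1) := by
  rw [cyclesIn_conj, Finset.sum_image fun _ _ _ _ h => Finset.image_injective π.injective h]
  simp only [Finset.card_image_of_injective _ π.injective]

end Conjugation

lemma Set.bijOn_mk_image {ι α : Type*} [DecidableEq α] (f : ι → Equiv.Perm α)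
    (S S' : ι → α → Finset α) (h : ∀ i x, S' i (f i x) = (S i x).image (f i)) :
    Set.BijOn (fun p : ι × Finset α => (p.1, p.2.image (f p.1)))
      {p | ∃ x, p.2 = S p.1 x} {p | ∃ x, p.2 = S' p.1 x} := by
  refine ⟨?_, ?_, ?_⟩
  · rintro ⟨i, c⟩ ⟨x, hx : c = S i x⟩
    exact ⟨f i x, by simp [hx, h]⟩
  · rintro ⟨i, c⟩ - ⟨j, c'⟩ - hij
    obtain ⟨rfl, hc⟩ := Prod.ext_iff.1 hij
    exact Prod.ext rfl (Finset.image_injective (f i).injective hc)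
  · rintro ⟨i, c⟩ ⟨y, hy : c = S' i y⟩
    refine ⟨(i, S i ((f i)⁻¹ y)), ⟨_, rfl⟩, ?_⟩
    simpa [hy] using (h i ((f i)⁻¹ y)).symm

section Orbits

lemma mem_orbitAt {D : PreDecoration P T} {v : T.V} {x y : Fin P.d} :
    y ∈ orbitAt D v x ↔ ∃ π ∈ monAt D v, π x = y := by
  simp [orbitAt]

lemma mem_orbitOfFinset {D : PreDecoration P T} {v : T.V} {c : Finset (Fin P.d)}
    {y : Fin P.d} : y ∈ orbitOfFinset D v c ↔ ∃ x ∈ c, y ∈ orbitAt D v x := by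
  simp [orbitOfFinset]

lemma orbitAt_apply_of_mem {D : PreDecoration P T} {v : T.V} {ρ : Equiv.Perm (Fin P.d)}
    (hρ : ρ ∈ monAt D v) (x : Fin P.d) : orbitAt D v (ρ x) = orbitAt D v x := by
  ext y
  simp only [mem_orbitAt]
  constructor
  · rintro ⟨π, hπ, rfl⟩
    exact ⟨π * ρ, mul_mem hπ hρ, rfl⟩
  · rintro ⟨π, hπ, rfl⟩
    exact ⟨π * ρ⁻¹, mul_mem hπ (inv_mem hρ), by simp⟩

lemma image_orbitAt_of_mem {D : PreDecoration P T} {v : T.V} {ρ : Equiv.Perm (Fin P.d)}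
    (hρ : ρ ∈ monAt D v) (x : Fin P.d) : (orbitAt D v x).image ρ = orbitAt D v x := by
  ext y
  simp only [Finset.mem_image, mem_orbitAt]
  constructor
  · rintro ⟨_, ⟨π, hπ, rfl⟩, rfl⟩
    exact ⟨ρ * π, mul_mem hρ hπ, rfl⟩
  · rintro ⟨π, hπ, rfl⟩
    exact ⟨(ρ⁻¹ * π) x, ⟨ρ⁻¹ * π, mul_mem (inv_mem hρ) hπ, rfl⟩, by simp⟩

lemma mon_mem_monAt {D : PreDecoration P T} {k : T.H} {v : T.V} (hk : T.base k = v) :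
    D.mon k ∈ monAt D v :=
  Subgroup.subset_closure ⟨k, hk, rfl⟩

lemma monAt_le_of_forall_conj {D E : PreDecoration P T} {v : T.V}
    (h : ∀ k, T.base k = v → ∃ π ∈ monAt D v, E.mon k = π * D.mon k * π⁻¹) :
    monAt E v ≤ monAt D v := by
  refine (Subgroup.closure_le _).2 ?_
  rintro _ ⟨k, hk, rfl⟩
  obtain ⟨π, hπ, hEk⟩ := h k hk
  rw [hEk]
  exact mul_mem (mul_mem hπ (mon_mem_monAt hk)) (inv_mem hπ)

lemma monAt_eq_map_conj {D E : PreDecoration P T} {v : T.V} {τ : Equiv.Perm (Fin P.d)}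
    (h : ∀ k, T.base k = v → E.mon k = τ * D.mon k * τ⁻¹) :
    monAt E v = (monAt D v).map (MulAut.conj τ).toMonoidHom := by
  rw [monAt, monAt, MonoidHom.map_closure]
  congr 1
  ext σ
  simp only [Set.mem_image, Set.mem_ofPred_eq, MulEquiv.coe_toMonoidHom, MulAut.conj_apply]
  constructor
  · rintro ⟨k, hk, rfl⟩
    exact ⟨D.mon k, ⟨k, hk, rfl⟩, (h k hk).symm⟩
  · rintro ⟨_, ⟨k, hk, rfl⟩, rfl⟩
    exact ⟨k, hk, (h k hk).symm⟩

lemma monAt_eq_of_conj_zpowers {D E : PreDecoration P T} {v : T.V} {h h₀ : T.H}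
    {ρ : Equiv.Perm (Fin P.d)} (hh₀ : T.base h₀ = v)
    (hρ : ρ ∈ Subgroup.zpowers (D.mon h₀)) (hEh : E.mon h = ρ * D.mon h * ρ⁻¹)
    (hEk : ∀ k, k ≠ h → T.base k = v → E.mon k = D.mon k) :
    monAt E v = monAt D v := by
  have hE₀ : E.mon h₀ = D.mon h₀ := by
    by_cases h₀h : h₀ = h
    · subst h₀h
      obtain ⟨n, rfl⟩ := Subgroup.mem_zpowers_iff.1 hρ
      rw [hEh, ((Commute.refl _).zpow_left n).eq, mul_inv_cancel_right]
    · exact hEk h₀ h₀h hh₀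
  have hρD : ρ ∈ monAt D v := Subgroup.zpowers_le.2 (mon_mem_monAt hh₀) hρ
  have hρE : ρ ∈ monAt E v := Subgroup.zpowers_le.2 (hE₀ ▸ mon_mem_monAt hh₀) hρ
  refine le_antisymm (monAt_le_of_forall_conj fun k hk => ?_)
    (monAt_le_of_forall_conj fun k hk => ?_)
  · by_cases hkh : k = h
    · exact ⟨ρ, hρD, hkh ▸ hEh⟩
    · exact ⟨1, one_mem _, by simp [hEk k hkh hk]⟩
  · by_cases hkh : k = h
    · subst hkh
      exact ⟨ρ⁻¹, inv_mem hρE, by rw [hEh]; group⟩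
    · exact ⟨1, one_mem _, by simp [hEk k hkh hk]⟩

lemma orbitAt_conj {D E : PreDecoration P T} {v : T.V} {τ : Equiv.Perm (Fin P.d)}
    (h : monAt E v = (monAt D v).map (MulAut.conj τ).toMonoidHom) (x : Fin P.d) :
    orbitAt E v (τ x) = (orbitAt D v x).image τ := by
  ext y
  simp only [mem_orbitAt, Finset.mem_image, h, Subgroup.mem_map, MulEquiv.coe_toMonoidHom,
    MulAut.conj_apply]
  constructor
  · rintro ⟨_, ⟨π, hπ, rfl⟩, rfl⟩
    exact ⟨π x, ⟨π, hπ, rfl⟩, by simp⟩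
  · rintro ⟨_, ⟨π, hπ, rfl⟩, rfl⟩
    exact ⟨_, ⟨π, hπ, rfl⟩, by simp⟩

lemma orbitOfFinset_image {D E : PreDecoration P T} {v : T.V}
    {τ σ : Equiv.Perm (Fin P.d)} (h : ∀ x, orbitAt E v (σ x) = (orbitAt D v x).image τ)
    (c : Finset (Fin P.d)) :
    orbitOfFinset E v (c.image σ) = (orbitOfFinset D v c).image τ := by
  ext y
  simp only [mem_orbitOfFinset, Finset.mem_image, exists_exists_and_eq_and, h]
  constructor
  · rintro ⟨x, hx, z, hz, rfl⟩
    exact ⟨z, ⟨x, hx, hz⟩, rfl⟩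
  · rintro ⟨z, ⟨x, hx, hz⟩, rfl⟩
    exact ⟨x, hx, z, hz, rfl⟩

end Orbits

section SourceGraphIso

@[refl]
lemma IsoSourceGraphs.refl (D : PreDecoration P T) : IsoSourceGraphs D D :=
  ⟨id, id, Set.bijOn_id _, Set.bijOn_id _, fun _ _ => rfl, fun _ _ => rfl,
    fun _ _ _ => Iff.rfl, fun _ => rfl⟩

@[trans]
lemma IsoSourceGraphs.trans {D₁ D₂ D₃ : PreDecoration P T} (h₁₂ : IsoSourceGraphs D₁ D₂)
    (h₂₃ : IsoSourceGraphs D₂ D₃) : IsoSourceGraphs D₁ D₃ := by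
  obtain ⟨eV, eH, hV, hH, hattach, hpair, hRH, hleg⟩ := h₁₂
  obtain ⟨eV', eH', hV', hH', hattach', hpair', hRH', hleg'⟩ := h₂₃
  refine ⟨eV' ∘ eV, eH' ∘ eH, hV'.comp hV, hH'.comp hH, fun q hq => ?_, fun q hq => ?_,
    fun p hp n => (hRH p hp n).trans (hRH' _ (hV.mapsTo hp) n), fun a => ?_⟩
  · simp only [Function.comp_apply, hattach' _ (hH.mapsTo hq), hattach q hq]
  · simp only [Function.comp_apply, hpair q hq, hpair' _ (hH.mapsTo hq)]
  · simp only [Function.comp_apply, hleg, hleg']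

lemma localSum_image_of_conj {D E : PreDecoration P T} {v : T.V}
    {σ : T.H → Equiv.Perm (Fin P.d)} {τ : Equiv.Perm (Fin P.d)}
    (hmon : ∀ k, T.base k = v → E.mon k = σ k * D.mon k * (σ k)⁻¹)
    (hσ : ∀ k, T.base k = v → τ⁻¹ * σ k ∈ monAt D v) {O : Finset (Fin P.d)}
    (hO : IsOrbitAt D v O) : localSum E v (O.image τ) = localSum D v O := by
  obtain ⟨x, rfl⟩ := hO
  refine Finset.sum_congr rfl fun k hk => ?_
  replace hk : T.base k = v := (Finset.mem_filter.1 hk).2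
  set μ := τ⁻¹ * σ k
  have hσk : σ k = τ * μ := by simp [μ]
  calc ∑ c ∈ cyclesIn (E.mon k) ((orbitAt D v x).image τ), ((c.card : ℤ) - 1)
      = ∑ c ∈ cyclesIn (τ * (μ * D.mon k * μ⁻¹) * τ⁻¹) ((orbitAt D v x).image τ),
          ((c.card : ℤ) - 1) := by rw [hmon k hk, hσk]; group
    _ = ∑ c ∈ cyclesIn (μ * D.mon k * μ⁻¹) ((orbitAt D v x).image μ), ((c.card : ℤ) - 1) := by
      rw [sum_cyclesIn_conj, image_orbitAt_of_mem (hσ k hk)]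
    _ = _ := sum_cyclesIn_conj _ _ _

theorem isoSourceGraphs_of_conj {D E : PreDecoration P T}
    (σ : T.H → Equiv.Perm (Fin P.d)) (τ : T.V → Equiv.Perm (Fin P.d))
    (hmon : ∀ k, E.mon k = σ k * D.mon k * (σ k)⁻¹)
    (hcyc : ∀ a, E.cyc a = σ (T.leg (P.phi a)) (D.cyc a))
    (hpair : ∀ k, σ (T.pair k) = σ k)
    (hmonAt : ∀ v, monAt E v = (monAt D v).map (MulAut.conj (τ v)).toMonoidHom)
    (hσ : ∀ k, (τ (T.base k))⁻¹ * σ k ∈ monAt D (T.base k)) :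
    IsoSourceGraphs D E := by
  have horbit : ∀ k x,
      orbitAt E (T.base k) (σ k x) = (orbitAt D (T.base k) x).image (τ (T.base k)) := by
    intro k x
    have hx : σ k x = τ (T.base k) (((τ (T.base k))⁻¹ * σ k) x) := by simp
    rw [hx, orbitAt_conj (hmonAt _), orbitAt_apply_of_mem (hσ k)]
  refine ⟨fun p => (p.1, p.2.image (τ p.1)), fun q => (q.1, q.2.image (σ q.1)),
    Set.bijOn_mk_image τ (orbitAt D) (orbitAt E) fun v x => orbitAt_conj (hmonAt v) x,
    Set.bijOn_mk_image σ (fun k => cycleFinset (D.mon k)) (fun k => cycleFinset (E.mon k))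
      fun k x => by rw [hmon, cycleFinset_conj],
    fun q _ => Prod.ext rfl (orbitOfFinset_image (horbit q.1) q.2),
    fun q _ => by simp [hpair], fun p hp n => ?_, fun a => by simp [hmon, hcyc, cycleFinset_conj]⟩
  have hsum := localSum_image_of_conj (fun k _ => hmon k) (fun k hk => hk ▸ hσ k) hp
  simp only [LocalRH, hsum, Finset.card_image_of_injective _ (τ p.1).injective]

lemma isoSourceGraphs_globalConj (D : PreDecoration P T) (τ : Equiv.Perm (Fin P.d)) :
    IsoSourceGraphs D (globalConj τ D) :=
  isoSourceGraphs_of_conj (fun _ => τ) (fun _ => τ) (fun _ => rfl) (fun _ => rfl) (fun _ => rfl)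
    (fun _ => monAt_eq_map_conj fun _ _ => rfl) (fun _ => by simp [one_mem])

theorem isoSourceGraphs_of_conj_inSide (hT : T.IsStableTree) {D E : PreDecoration P T}
    {h h₀ : T.H} {ρ : Equiv.Perm (Fin P.d)} (hh₀ : T.base h₀ = T.base h)
    (hρ : ρ ∈ Subgroup.zpowers (D.mon h₀))
    (hmon : ∀ k, E.mon k = if T.InSide h k then ρ * D.mon k * ρ⁻¹ else D.mon k)
    (hcyc : ∀ a, E.cyc a = if T.InSide h (T.leg (P.phi a)) then ρ (D.cyc a) else D.cyc a) :
    IsoSourceGraphs D E := by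
  let InBranch : T.V → Prop := fun v =>
    T.pair h ≠ h ∧ Relation.ReflTransGen (T.AdjAvoid (T.base h)) (T.base (T.pair h)) v
  have hbase_notin : ¬ InBranch (T.base h) := fun ⟨hph, hpath⟩ =>
    BMarkedGraph.ne_of_reflTransGen_adjAvoid_s9 (hT.1 h hph) hpath rfl
  have hself : T.InSide h h := Or.inl rfl
  have hInSide : ∀ k, k ≠ h → (T.InSide h k ↔ InBranch (T.base k)) := by
    intro k hk
    simp [BMarkedGraph.InSide, hk, InBranch]
  have hmonAt : monAt E (T.base h) = monAt D (T.base h) :=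
    monAt_eq_of_conj_zpowers hh₀ hρ (by rw [hmon, if_pos hself])
      fun k hk hkh => by rw [hmon, if_neg ((hInSide k hk).not.2 (hkh ▸ hbase_notin))]
  refine isoSourceGraphs_of_conj (fun k => if T.InSide h k then ρ else 1)
    (fun v => if InBranch v then ρ else 1) (fun k => ?_) (fun a => ?_)
    (fun k => by simp only [hT.inSide_pair_iff]) (fun v => ?_) (fun k => ?_)
  · rw [hmon]; split_ifs <;> simp
  · rw [hcyc]; split_ifs <;> simp
  · by_cases hv : v = T.base h
    · subst hv
      ext π
      simp [hbase_notin, hmonAt]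
    · refine monAt_eq_map_conj fun k hk => ?_
      have hkh : k ≠ h := by rintro rfl; exact hv hk.symm
      rw [hmon, ← hk]
      simp only [hInSide k hkh]
      split_ifs <;> simp
  · by_cases hkh : k = h
    · subst hkh
      simpa [hbase_notin, BMarkedGraph.InSide] using Subgroup.zpowers_le.2 (mon_mem_monAt hh₀) hρ
    · simp only [hInSide k hkh]
      split_ifs <;> simp [one_mem]

lemma isoSourceGraphs_braidACW (hT : T.IsStableTree) (D : PreDecoration P T) (h : T.H)
    (hord : ∀ k, T.base (D.ord k) = T.base k) : IsoSourceGraphs D (braidACW D h) :=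
  isoSourceGraphs_of_conj_inSide hT (hord h) (Subgroup.mem_zpowers _) (fun _ => rfl)
    (fun _ => rfl)

lemma isoSourceGraphs_braidCW (hT : T.IsStableTree) (D : PreDecoration P T) (h : T.H)
    (hord : ∀ k, T.base (D.ord k) = T.base k) : IsoSourceGraphs D (braidCW D h) :=
  isoSourceGraphs_of_conj_inSide hT (h₀ := D.ord⁻¹ h) (by simpa using (hord (D.ord⁻¹ h)).symm)
    (inv_mem (Subgroup.mem_zpowers _)) (fun _ => by simp [braidCW]) (fun _ => rfl)

end SourceGraphIso

lemma Equiv.Perm.apply_swap_conj_eq_self {α β : Type*} [DecidableEq α] {f : α → β}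
    {e : Equiv.Perm α} (he : ∀ x, f (e x) = f x) {a b : α} (hab : f a = f b) (x : α) :
    f ((Equiv.swap a b * e * (Equiv.swap a b)⁻¹) x) = f x := by
  simp only [Equiv.Perm.mul_apply, Equiv.swap_inv, Equiv.apply_swap_eq_self hab, he]

lemma HurwitzStep.base_ord {D D' : PreDecoration P T} (hs : HurwitzStep P T D D')
    (hord : ∀ k, T.base (D.ord k) = T.base k) (k : T.H) :
    T.base (D'.ord k) = T.base k := by
  cases hs with
  | conj => exact hord k
  | acw _ h => exact Equiv.Perm.apply_swap_conj_eq_self hord (hord h).symm k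
  | cw _ h =>
    exact Equiv.Perm.apply_swap_conj_eq_self hord (by simpa using hord (D.ord⁻¹ h)) k

lemma HurwitzStep.isoSourceGraphs (hT : T.IsStableTree) {D D' : PreDecoration P T}
    (hs : HurwitzStep P T D D') (hord : ∀ k, T.base (D.ord k) = T.base k) :
    IsoSourceGraphs D D' := by
  cases hs with
  | conj τ => exact isoSourceGraphs_globalConj D τ
  | acw _ h => exact isoSourceGraphs_braidACW hT D h hord
  | cw _ h => exact isoSourceGraphs_braidCW hT D h hord

theorem isoSourceGraphs_of_hurwitzEquiv_general (P : Portrait B A) (T : BMarkedGraph B)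
    (hT : T.IsStableTree) (D₁ D₂ : PreDecoration P T)
    (hD₁ : IsDecoration P T D₁)
    (hEquiv : HurwitzEquiv P T D₁ D₂) :
    IsoSourceGraphs D₁ D₂ := by
  have hord_iso : (∀ k, T.base (D₂.ord k) = T.base k) ∧ IsoSourceGraphs D₁ D₂ := by
    induction hEquiv with
    | refl => exact ⟨hD₁.1, .refl D₁⟩
    | tail _ hs ih => exact ⟨hs.base_ord ih.1, ih.2.trans (hs.isoSourceGraphs hT ih.1)⟩
  exact hord_iso.2

/-- Hurwitz equivalent `P`-decorations of a `B`-marked stable tree have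
isomorphic source graphs, as `A`-marked vertex-weighted graphs. -/
theorem isoSourceGraphs_of_hurwitzEquiv (P : Portrait B A) (T : BMarkedGraph B)
    (hT : T.IsStableTree) (D₁ D₂ : PreDecoration P T)
    (hD₁ : IsDecoration P T D₁) (hD₂ : IsDecoration P T D₂)
    (hEquiv : HurwitzEquiv P T D₁ D₂) :
    IsoSourceGraphs D₁ D₂ :=
  isoSourceGraphs_of_hurwitzEquiv_general P T hT D₁ D₂ hD₁ hEquiv
end
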